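/- arXiv:2103.12624 — 8 statements merged into one kernel-verified Lean document; each statement's English description precedes it below -/
import Mathlib

section
/- Let X_1, …, X_N be compact subsets of ℝ^d, let c : X_1 × … × X_N → ℝ be continuous, and let μ_i be a Borel probability measure on X_i for each i ∈ {1,…,N}. For each ν ∈ ℕ and each i, let μ_i^{(ν)} be a finitely supported Borel probability measure on X_i, and assume that μ_i^{(ν)} converges weak* to μ_i as ν → ∞. Then the optimal cost of the discretized problem, inf{ ∫ c dγ : γ a Borel probability measure on X_1 × … × X_N with M_{X_i}γ = μ_i^{(ν)} for all i }, converges as ν → ∞ to the optimal cost of the continuous problem, inf{ ∫ c dγ : γ a Borel probability measure on X_1 × … × X_N with M_{X_i}γ = μ_i for all i }. -/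
open MeasureTheory ProbabilityTheory Filter Topology Set
open scoped ENNReal

/-!
Partition each `X i` into finitely many cells of small diameter whose boundaries are `μ i`-null;
by the portmanteau theorem the cell masses of `μn ν i` converge to those of `μ i`. For any two
families of marginals `p`, `q`, each `p i` can be coupled to `q i` so that mass changes cell only
up to `∑ j, (p i (cell j) - q i (cell j))`: keep the common mass `min` inside each cell and couple
the excesses independently. Disintegrating these couplings and moving every coordinate of a
transport plan for `p` by the resulting kernels yields a plan for `q` whose cost exceeds the
original one by at most `ε + 2 sup |c| · (cell discrepancy)`, where `ε` bounds the oscillation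
of `c` on products of cells. By symmetry the optimal costs differ by at most that much, and the
discrepancy tends to zero.
-/

namespace ProbabilityTheory.Kernel

variable {ι : Type*} [Fintype ι] {S T : ι → Type*} [∀ i, MeasurableSpace (S i)]
  [∀ i, MeasurableSpace (T i)]

noncomputable def pi (κ : ∀ i, Kernel (S i) (T i)) [∀ i, IsMarkovKernel (κ i)] :
    Kernel (∀ i, S i) (∀ i, T i) where
  toFun x := Measure.pi fun i => κ i (x i)
  measurable' := by
    refine .measure_of_isPiSystem_of_isProbabilityMeasure generateFrom_pi.symm isPiSystem_pi ?_
    rintro _ ⟨s, hs, rfl⟩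
    simp_rw [Measure.pi_pi]
    exact Finset.measurable_prod _ fun i _ =>
      (Kernel.measurable_coe (κ i) (hs i (mem_univ i))).comp (measurable_pi_apply i)

variable (κ : ∀ i, Kernel (S i) (T i)) [∀ i, IsMarkovKernel (κ i)]

lemma pi_apply (x : ∀ i, S i) : pi κ x = Measure.pi fun i => κ i (x i) := rfl

instance : IsMarkovKernel (pi κ) := ⟨fun x => by rw [pi_apply]; infer_instance⟩

lemma pi_apply_eval_preimage (x : ∀ i, S i) (i : ι) {s : Set (T i)} (hs : MeasurableSet s) :
    pi κ x (Function.eval i ⁻¹' s) = κ i (x i) s := by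
  rw [pi_apply, ← Measure.map_apply (measurable_pi_apply i) hs,
    (measurePreserving_eval _ i).map_eq]

lemma _root_.MeasureTheory.Measure.map_compProd_pi_eval (γ : Measure (∀ i, S i)) [SFinite γ]
    (i : ι) : (γ ⊗ₘ pi κ).map (fun z => (z.1 i, z.2 i)) = γ.map (fun x => x i) ⊗ₘ κ i := by
  have hf : Measurable fun z : (∀ i, S i) × (∀ i, T i) => (z.1 i, z.2 i) := by fun_prop
  ext s hs
  rw [Measure.map_apply hf hs, Measure.compProd_apply (hf hs), Measure.compProd_apply hs,
    MeasureTheory.lintegral_map (measurable_kernel_prodMk_left hs) (measurable_pi_apply i)]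
  exact lintegral_congr fun x => pi_apply_eval_preimage κ x i (measurable_prodMk_left hs)

end ProbabilityTheory.Kernel

lemma integral_comp_snd_le_integral_comp_fst_add {α : Type*} [MeasurableSpace α]
    (η : Measure (α × α)) [IsProbabilityMeasure η] {c : α → ℝ} (hc : Measurable c) {C : ℝ}
    (hC : ∀ x, |c x| ≤ C) {F : Set (α × α)} (hF : MeasurableSet F) {ε : ℝ} (hε : 0 ≤ ε)
    (hcF : ∀ z ∈ F, c z.2 - c z.1 ≤ ε) :
    ∫ z, c z.2 ∂η ≤ ∫ z, c z.1 ∂η + ε + 2 * C * η.real Fᶜ := by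
  have hint : ∀ g : α × α → α, Measurable g → Integrable (fun z => c (g z)) η := fun g hg =>
    .of_bound (hc.comp hg).aestronglyMeasurable C (ae_of_all _ fun z => hC (g z))
  have hbound : Integrable (fun z => c z.1 + ε + Fᶜ.indicator (fun _ => 2 * C) z) η :=
    ((hint _ measurable_fst).add (integrable_const ε)).add
      ((integrable_const _).indicator hF.compl)
  calc ∫ z, c z.2 ∂η ≤ ∫ z, (c z.1 + ε + Fᶜ.indicator (fun _ => 2 * C) z) ∂η := by
        refine integral_mono (hint _ measurable_snd) hbound fun z => ?_
        by_cases hz : z ∈ F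
        · simp only [indicator_of_notMem (notMem_compl_iff.2 hz)]
          linarith [hcF z hz]
        · simp only [indicator_of_mem (mem_compl hz)]
          linarith [(abs_le.1 (hC z.1)).1, (abs_le.1 (hC z.2)).2]
    _ = ∫ z, c z.1 ∂η + ε + 2 * C * η.real Fᶜ := by
        rw [integral_add (f := fun z => c z.1 + ε)
            ((hint _ measurable_fst).add (integrable_const ε))
            ((integrable_const _).indicator hF.compl),
          integral_add (hint _ measurable_fst) (integrable_const ε),
          integral_const, integral_indicator_const _ hF.compl]
        simp [mul_comm]

theorem exists_gluing_integral_le {ι : Type*} [Fintype ι] {S : ι → Type*}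
    [∀ i, MeasurableSpace (S i)] [∀ i, StandardBorelSpace (S i)] [∀ i, Nonempty (S i)]
    (γ : Measure (∀ i, S i)) [IsProbabilityMeasure γ]
    (ρ : ∀ i, Measure (S i × S i)) [∀ i, IsFiniteMeasure (ρ i)]
    (hγ : ∀ i, γ.map (fun x => x i) = (ρ i).fst)
    {c : (∀ i, S i) → ℝ} (hc : Measurable c) {C : ℝ} (hC : ∀ x, |c x| ≤ C)
    {E : ∀ i, Set (S i × S i)} (hE : ∀ i, MeasurableSet (E i)) {ε : ℝ} (hε : 0 ≤ ε)
    (hcE : ∀ x y, (∀ i, (x i, y i) ∈ E i) → c y - c x ≤ ε) :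
    ∃ γ' : Measure (∀ i, S i), IsProbabilityMeasure γ' ∧
      (∀ i, γ'.map (fun x => x i) = (ρ i).snd) ∧
      ∫ x, c x ∂γ' ≤ ∫ x, c x ∂γ + ε + 2 * C * ∑ i, (ρ i).real (E i)ᶜ := by
  set η := γ ⊗ₘ Kernel.pi fun i => (ρ i).condKernel
  have hpair : ∀ i, Measurable fun z : (∀ i, S i) × (∀ i, S i) => (z.1 i, z.2 i) := by
    intro i; fun_prop
  have hη : ∀ i, η.map (fun z => (z.1 i, z.2 i)) = ρ i := fun i => by
    rw [Measure.map_compProd_pi_eval, hγ, Measure.disintegrate]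
  set F := ⋂ i, (fun z : (∀ i, S i) × (∀ i, S i) => (z.1 i, z.2 i)) ⁻¹' E i
  have hF : MeasurableSet F := .iInter fun i => hpair i (hE i)
  have hηF : η.real Fᶜ ≤ ∑ i, (ρ i).real (E i)ᶜ := by
    simp only [F, compl_iInter, ← preimage_compl]
    refine (measureReal_iUnion_fintype_le _).trans (Finset.sum_le_sum fun i _ => ?_)
    rw [← hη i, map_measureReal_apply (hpair i) (hE i).compl]
  refine ⟨η.snd, inferInstance, fun i => ?_, ?_⟩
  · rw [← hη i, Measure.snd, Measure.map_map (measurable_pi_apply i) measurable_snd, Measure.snd,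
      Measure.map_map measurable_snd (hpair i)]
    rfl
  · have h := integral_comp_snd_le_integral_comp_fst_add η hc hC hF hε
      fun z hz => hcE z.1 z.2 fun i => mem_iInter.1 hz i
    rw [Measure.snd, integral_map measurable_snd.aemeasurable hc.aestronglyMeasurable]
    conv_rhs => rw [← Measure.fst_compProd γ (Kernel.pi fun i => (ρ i).condKernel)]
    rw [Measure.fst, integral_map measurable_fst.aemeasurable hc.aestronglyMeasurable]
    have hC0 : 0 ≤ C := (abs_nonneg _).trans (hC (Classical.arbitrary _))
    exact h.trans (by gcongr)

namespace MeasureTheory.Measure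

variable {α β : Type*} [MeasurableSpace α] [MeasurableSpace β]

noncomputable def indepCoupling (μ : Measure α) (ν : Measure β) : Measure (α × β) :=
  (μ univ)⁻¹ • μ.prod ν

variable {μ : Measure α} {ν : Measure β} [IsFiniteMeasure ν]

lemma indepCoupling_prod (h : μ univ = ν univ) (s : Set α) (t : Set β) :
    indepCoupling μ ν (s ×ˢ t) = μ s * ν t / ν univ := by
  rw [indepCoupling, smul_apply, prod_prod, smul_eq_mul, h, ENNReal.div_eq_inv_mul]

lemma fst_indepCoupling (h : μ univ = ν univ) : (indepCoupling μ ν).fst = μ := by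
  ext s hs
  rw [fst_apply hs, ← prod_univ, indepCoupling_prod h, mul_div_assoc]
  rcases eq_or_ne (ν univ) 0 with h0 | h0
  · simp [measure_mono_null (subset_univ s) (h.trans h0)]
  · rw [ENNReal.div_self h0 (measure_ne_top _ _), mul_one]

lemma snd_indepCoupling (h : μ univ = ν univ) : (indepCoupling μ ν).snd = ν := by
  ext t ht
  rw [snd_apply ht, ← univ_prod, indepCoupling_prod h, h, mul_comm, mul_div_assoc]
  rcases eq_or_ne (ν univ) 0 with h0 | h0
  · simp [measure_mono_null (subset_univ t) h0]
  · rw [ENNReal.div_self h0 (measure_ne_top _ _), mul_one]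

end MeasureTheory.Measure

section CellCoupling

variable {α ι : Type*} [MeasurableSpace α] [Fintype ι] {f : α → ι}

lemma cond_compl_self (μ : Measure α) {s : Set α} (hs : MeasurableSet s) : μ[sᶜ|s] = 0 := by
  rw [cond_apply hs, inter_compl_self, measure_empty, mul_zero]

lemma smul_cond_apply_univ (μ : Measure α) [IsFiniteMeasure μ] {s : Set α} {c : ℝ≥0∞}
    (hc : c ≤ μ s) : (c • μ[|s]) univ = c := by
  rcases eq_or_ne (μ s) 0 with h | h
  · simp [le_zero_iff.1 (h ▸ hc)]
  · have := cond_isProbabilityMeasure (μ := μ) h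
    simp

lemma isFiniteMeasure_smul_cond (μ : Measure α) [IsFiniteMeasure μ] {s : Set α} {c : ℝ≥0∞}
    (hc : c ≤ μ s) : IsFiniteMeasure (c • μ[|s]) :=
  ⟨by rw [smul_cond_apply_univ μ hc]; exact hc.trans_lt (measure_lt_top μ s)⟩

lemma sum_smul_cond_apply_univ (μ : Measure α) [IsFiniteMeasure μ] {w : ι → ℝ≥0∞}
    (hw : ∀ j, w j ≤ μ (f ⁻¹' {j})) : (∑ j, w j • μ[|f ← j]) univ = ∑ j, w j := by
  simp only [Measure.coe_finsetSum, Finset.sum_apply]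
  exact Finset.sum_congr rfl fun j _ => smul_cond_apply_univ μ (hw j)

variable [MeasurableSpace ι] [DiscreteMeasurableSpace ι]

lemma sum_min_smul_cond_add_sum_tsub_smul_cond (μ : Measure α) [IsFiniteMeasure μ]
    (hf : Measurable f) (b : ι → ℝ≥0∞) :
    ∑ j, min (μ (f ⁻¹' {j})) (b j) • μ[|f ← j] + ∑ j, (μ (f ⁻¹' {j}) - b j) • μ[|f ← j] = μ := by
  rw [← Finset.sum_add_distrib]
  simp_rw [← add_smul, add_comm (min _ _), tsub_add_min]
  exact sum_meas_smul_cond_fiber hf μ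

lemma sum_tsub_measure_preimage_eq (p q : Measure α) [IsProbabilityMeasure p]
    [IsProbabilityMeasure q] (hf : Measurable f) :
    ∑ j, (p (f ⁻¹' {j}) - q (f ⁻¹' {j})) = ∑ j, (q (f ⁻¹' {j}) - p (f ⁻¹' {j})) := by
  have hsum : ∀ μ : Measure α, IsProbabilityMeasure μ → ∑ j, μ (f ⁻¹' {j}) = 1 := fun μ _ => by
    rw [sum_measure_preimage_singleton _ fun j _ => hf (measurableSet_singleton j)]
    simp
  have hmin : ∑ j, min (p (f ⁻¹' {j})) (q (f ⁻¹' {j})) ≠ ∞ :=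
    ENNReal.sum_ne_top.2 fun j _ => (min_le_left _ _).trans_lt (measure_lt_top _ _) |>.ne
  refine (ENNReal.add_left_inj hmin).1 ?_
  simp_rw [← Finset.sum_add_distrib, tsub_add_min, min_comm (p _), tsub_add_min,
    hsum p ‹_›, hsum q ‹_›]

lemma measure_setOf_ne_eq_zero_of_fst_snd (hf : Measurable f) {ρ : Measure (α × α)} {j : ι}
    (h₁ : ρ.fst (f ⁻¹' {j})ᶜ = 0) (h₂ : ρ.snd (f ⁻¹' {j})ᶜ = 0) : ρ {z | f z.1 ≠ f z.2} = 0 := by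
  have hj := (hf (measurableSet_singleton j)).compl
  rw [Measure.fst_apply hj] at h₁
  rw [Measure.snd_apply hj] at h₂
  refine measure_mono_null (fun z hz => ?_) (measure_union_null h₁ h₂)
  by_contra h
  simp_all

theorem exists_coupling_measure_setOf_ne_le (p q : Measure α) [IsProbabilityMeasure p]
    [IsProbabilityMeasure q] (hf : Measurable f) :
    ∃ ρ : Measure (α × α), ρ.fst = p ∧ ρ.snd = q ∧
      ρ {z | f z.1 ≠ f z.2} ≤ ∑ j, (p (f ⁻¹' {j}) - q (f ⁻¹' {j})) := by
  set a : ι → ℝ≥0∞ := fun j => p (f ⁻¹' {j})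
  set b : ι → ℝ≥0∞ := fun j => q (f ⁻¹' {j})
  set P₀ : ι → Measure α := fun j => min (a j) (b j) • p[|f ← j]
  set Q₀ : ι → Measure α := fun j => min (b j) (a j) • q[|f ← j]
  set P₁ : Measure α := ∑ j, (a j - b j) • p[|f ← j]
  set Q₁ : Measure α := ∑ j, (b j - a j) • q[|f ← j]
  have : ∀ j, IsFiniteMeasure (Q₀ j) := fun j => isFiniteMeasure_smul_cond q (min_le_left _ _)
  have : ∀ j, IsFiniteMeasure ((b j - a j) • q[|f ← j]) := fun j =>
    isFiniteMeasure_smul_cond q tsub_le_self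
  have hP₀ : ∀ j, P₀ j univ = Q₀ j univ := fun j => by
    rw [smul_cond_apply_univ p (min_le_left _ _), smul_cond_apply_univ q (min_le_left _ _),
      min_comm]
  have hP₁ : P₁ univ = Q₁ univ := by
    rw [sum_smul_cond_apply_univ p fun _ => tsub_le_self,
      sum_smul_cond_apply_univ q fun _ => tsub_le_self]
    exact sum_tsub_measure_preimage_eq p q hf
  have hD : (∑ j, (P₀ j).indepCoupling (Q₀ j)) {z | f z.1 ≠ f z.2} = 0 := by
    simp only [Measure.coe_finsetSum, Finset.sum_apply]
    refine Finset.sum_eq_zero fun j _ => measure_setOf_ne_eq_zero_of_fst_snd hf (j := j) ?_ ?_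
    · simp [Measure.fst_indepCoupling (hP₀ j), P₀, cond_compl_self p (hf (.singleton j))]
    · simp [Measure.snd_indepCoupling (hP₀ j), Q₀, cond_compl_self q (hf (.singleton j))]
  refine ⟨∑ j, (P₀ j).indepCoupling (Q₀ j) + P₁.indepCoupling Q₁, ?_, ?_, ?_⟩
  · rw [Measure.fst_add, ← Measure.sum_fintype, Measure.fst_sum, Measure.sum_fintype]
    simp_rw [Measure.fst_indepCoupling (hP₀ _), Measure.fst_indepCoupling hP₁]
    exact sum_min_smul_cond_add_sum_tsub_smul_cond p hf b
  · rw [Measure.snd_add, ← Measure.sum_fintype, Measure.snd_sum, Measure.sum_fintype]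
    simp_rw [Measure.snd_indepCoupling (hP₀ _), Measure.snd_indepCoupling hP₁]
    exact sum_min_smul_cond_add_sum_tsub_smul_cond q hf a
  · calc _ ≤ P₁.indepCoupling Q₁ univ := by
          rw [Measure.add_apply, hD, zero_add]; exact measure_mono (subset_univ _)
      _ = ∑ j, (a j - b j) := by
          rw [← Measure.fst_univ, Measure.fst_indepCoupling hP₁,
            sum_smul_cond_apply_univ p fun _ => tsub_le_self]

end CellCoupling

lemma exists_preimage_singleton_eq_disjointed {α : Type*} {m : ℕ} (B : Fin m → Set α)
    (hB : ⋃ j, B j = univ) : ∃ f : α → Fin m, ∀ j, f ⁻¹' {j} = disjointed B j := by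
  have hcover : ∀ x, ∃ j, x ∈ disjointed B j := fun x =>
    mem_iUnion.1 (by rw [iUnion_disjointed, hB]; exact mem_univ x)
  choose f hf using hcover
  refine ⟨f, fun j => Subset.antisymm (fun x hx => hx ▸ hf x) fun x hx => ?_⟩
  by_contra hne
  exact (disjoint_disjointed B hne).ne_of_mem (hf x) hx rfl

theorem exists_measurable_fin_dist_le_null_frontier {S : Type*} [MetricSpace S] [CompactSpace S]
    [MeasurableSpace S] [OpensMeasurableSpace S] (μ : Measure S) [IsFiniteMeasure μ] {δ : ℝ}
    (hδ : 0 < δ) :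
    ∃ (m : ℕ) (f : S → Fin m), Measurable f ∧ (∀ x y, f x = f y → dist x y ≤ δ) ∧
      ∀ j, μ (frontier (f ⁻¹' {j})) = 0 := by
  have hr : ∀ x : S, ∃ r ∈ Ioo 0 (δ / 2), μ (frontier (Metric.ball x r)) = 0 := fun x => by
    simpa only [Metric.thickening_singleton] using
      exists_null_frontier_thickening μ {x} (half_pos hδ)
  choose r hr hr0 using hr
  obtain ⟨t, ht⟩ := isCompact_univ.elim_finite_subcover (fun x => Metric.ball x (r x))
    (fun _ => Metric.isOpen_ball) fun x _ =>
      mem_iUnion.2 ⟨x, Metric.mem_ball_self (hr x).1⟩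
  set center : Fin t.card → S := fun j => t.equivFin.symm j
  set B : Fin t.card → Set S := fun j => Metric.ball (center j) (r (center j))
  have hB : ⋃ j, B j = univ := by
    refine eq_univ_of_univ_subset (ht.trans fun x hx => ?_)
    obtain ⟨y, hy, hxy⟩ := mem_iUnion₂.1 hx
    exact mem_iUnion.2 ⟨t.equivFin ⟨y, hy⟩, by simpa [B, center] using hxy⟩
  obtain ⟨f, hf⟩ := exists_preimage_singleton_eq_disjointed B hB
  refine ⟨t.card, f, measurable_to_countable' fun j => ?_, fun x y hxy => ?_, fun j => ?_⟩
  · rw [hf]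
    exact disjointedRec (fun _ _ ht => ht.diff Metric.isOpen_ball.measurableSet)
      Metric.isOpen_ball.measurableSet
  · have hx : x ∈ B (f x) := disjointed_subset B _ (by rw [← hf]; rfl)
    have hy : y ∈ B (f x) := disjointed_subset B _ (by rw [← hf, hxy]; rfl)
    have := (hr (center (f x))).2
    linarith [dist_triangle_right x y (center (f x)), Metric.mem_ball.1 hx, Metric.mem_ball.1 hy]
  · rw [hf]
    refine disjointedRec (p := fun s => μ (frontier s) = 0) (fun s i hs => ?_) (hr0 _)
    rw [sdiff_eq]
    exact null_frontier_inter hs (by rw [frontier_compl]; exact hr0 _)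

lemma MeasureTheory.ProbabilityMeasure.measure_tsub_le_ofReal_dist {α : Type*} [MeasurableSpace α]
    (P Q : ProbabilityMeasure α) (s : Set α) :
    (P : Measure α) s - (Q : Measure α) s ≤ ENNReal.ofReal (dist (P s) (Q s)) := by
  rw [← ProbabilityMeasure.ennreal_coeFn_eq_coeFn_toMeasure,
    ← ProbabilityMeasure.ennreal_coeFn_eq_coeFn_toMeasure, ← ENNReal.coe_sub,
    ← ENNReal.ofReal_coe_nnreal, NNReal.coe_sub_def, NNReal.dist_eq]
  exact ENNReal.ofReal_le_ofReal (max_le (le_abs_self _) (abs_nonneg _))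

lemma MeasureTheory.ProbabilityMeasure.tendsto_sum_dist_preimage_singleton {Ω ι κ : Type*}
    {L : Filter ι} [MeasurableSpace Ω] [TopologicalSpace Ω] [OpensMeasurableSpace Ω]
    [HasOuterApproxClosed Ω] [Fintype κ] {μ : ProbabilityMeasure Ω} {μs : ι → ProbabilityMeasure Ω}
    (hμs : Tendsto μs L (𝓝 μ)) {f : Ω → κ} (hf : ∀ j, (μ : Measure Ω) (frontier (f ⁻¹' {j})) = 0) :
    Tendsto (fun n => ∑ j, dist (μs n (f ⁻¹' {j})) (μ (f ⁻¹' {j}))) L (𝓝 0) := by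
  have h := tendsto_finsetSum Finset.univ fun j _ =>
    (tendsto_measure_of_null_frontier_of_tendsto hμs (by simpa using hf j)).dist
      (tendsto_const_nhds (x := μ (f ⁻¹' {j})))
  simpa using h

section MMOT

variable {ι : Type*} {S : ι → Type*} [∀ i, MeasurableSpace (S i)]

noncomputable def mmotCost (c : (∀ i, S i) → ℝ) (μ : ∀ i, ProbabilityMeasure (S i)) : ℝ :=
  sInf { r : ℝ | ∃ γ : ProbabilityMeasure (∀ i, S i),
    (∀ i, (γ : Measure (∀ i, S i)).map (fun x => x i) = μ i) ∧
    r = ∫ x, c x ∂(γ : Measure (∀ i, S i)) }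

variable {c : (∀ i, S i) → ℝ} {C : ℝ} {μ : ∀ i, ProbabilityMeasure (S i)}

lemma mmotCost_le_integral (hC : ∀ x, |c x| ≤ C) (γ : ProbabilityMeasure (∀ i, S i))
    (hγ : ∀ i, (γ : Measure (∀ i, S i)).map (fun x => x i) = μ i) :
    mmotCost c μ ≤ ∫ x, c x ∂(γ : Measure (∀ i, S i)) := by
  refine csInf_le ⟨-C, ?_⟩ ⟨γ, hγ, rfl⟩
  rintro _ ⟨γ, -, rfl⟩
  have h := norm_integral_le_of_norm_le_const (μ := (γ : Measure (∀ i, S i)))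
    (ae_of_all _ fun x => (Real.norm_eq_abs (c x)).trans_le (hC x))
  simp only [probReal_univ, mul_one, Real.norm_eq_abs] at h
  linarith [neg_abs_le (∫ x, c x ∂(γ : Measure (∀ i, S i)))]

lemma le_mmotCost [Fintype ι] {a : ℝ} (h : ∀ γ : ProbabilityMeasure (∀ i, S i),
      (∀ i, (γ : Measure (∀ i, S i)).map (fun x => x i) = μ i) →
      a ≤ ∫ x, c x ∂(γ : Measure (∀ i, S i))) :
    a ≤ mmotCost c μ := by
  refine le_csInf ⟨_, ⟨⟨Measure.pi fun i => μ i, inferInstance⟩, fun i => ?_, rfl⟩⟩ ?_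
  · exact (measurePreserving_eval (fun i => (μ i : Measure (S i))) i).map_eq
  · rintro _ ⟨γ, hγ, rfl⟩
    exact h γ hγ

variable [Fintype ι] [∀ i, StandardBorelSpace (S i)] [∀ i, Nonempty (S i)] {κ : ι → Type*}
  [∀ i, Fintype (κ i)] [∀ i, MeasurableSpace (κ i)] [∀ i, DiscreteMeasurableSpace (κ i)]
  {f : ∀ i, S i → κ i} {ε : ℝ}

theorem mmotCost_le_add (hc : Measurable c) (hC : ∀ x, |c x| ≤ C) (hf : ∀ i, Measurable (f i))
    (hε : 0 ≤ ε) (hcf : ∀ x y, (∀ i, f i (x i) = f i (y i)) → |c x - c y| ≤ ε)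
    (p q : ∀ i, ProbabilityMeasure (S i)) :
    mmotCost c q ≤
      mmotCost c p + ε + 2 * C * ∑ i, ∑ j, dist (p i (f i ⁻¹' {j})) (q i (f i ⁻¹' {j})) := by
  have hC0 : 0 ≤ C := (abs_nonneg _).trans (hC (Classical.arbitrary _))
  choose ρ hρp hρq hρf using fun i =>
    exists_coupling_measure_setOf_ne_le (p i : Measure (S i)) (q i) (hf i)
  have : ∀ i, IsFiniteMeasure (ρ i) := fun i =>
    ⟨by rw [← Measure.fst_univ, hρp i]; exact measure_lt_top _ _⟩
  have hρ : ∀ i, (ρ i).real {z | f i z.1 = f i z.2}ᶜ ≤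
      ∑ j, dist (p i (f i ⁻¹' {j})) (q i (f i ⁻¹' {j})) := fun i => by
    refine ENNReal.toReal_le_of_le_ofReal (by positivity) ((hρf i).trans ?_)
    rw [ENNReal.ofReal_sum_of_nonneg fun _ _ => dist_nonneg]
    exact Finset.sum_le_sum fun j _ => ProbabilityMeasure.measure_tsub_le_ofReal_dist _ _ _
  rw [add_assoc, ← sub_le_iff_le_add]
  refine le_mmotCost fun γ hγ => ?_
  obtain ⟨γ', hγ', hγ'q, hγ'c⟩ := exists_gluing_integral_le (γ : Measure (∀ i, S i)) ρ
    (fun i => (hγ i).trans (hρp i).symm) hc hC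
    (fun i => measurableSet_eq_fun ((hf i).comp measurable_fst) ((hf i).comp measurable_snd)) hε
    fun x y hxy => (le_abs_self _).trans ((abs_sub_comm _ _).trans_le (hcf x y hxy))
  calc _ ≤ ∫ x, c x ∂γ' - _ :=
        sub_le_sub_right (mmotCost_le_integral hC ⟨γ', hγ'⟩ fun i => (hγ'q i).trans (hρq i)) _
    _ ≤ ∫ x, c x ∂(γ : Measure (∀ i, S i)) := by
        rw [sub_le_iff_le_add, ← add_assoc]
        refine hγ'c.trans ?_
        gcongr with i
        exact hρ i

theorem dist_mmotCost_le (hc : Measurable c) (hC : ∀ x, |c x| ≤ C) (hf : ∀ i, Measurable (f i))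
    (hε : 0 ≤ ε) (hcf : ∀ x y, (∀ i, f i (x i) = f i (y i)) → |c x - c y| ≤ ε)
    (p q : ∀ i, ProbabilityMeasure (S i)) :
    dist (mmotCost c p) (mmotCost c q) ≤
      ε + 2 * C * ∑ i, ∑ j, dist (p i (f i ⁻¹' {j})) (q i (f i ⁻¹' {j})) := by
  have hpq := mmotCost_le_add hc hC hf hε hcf p q
  have hqp := mmotCost_le_add hc hC hf hε hcf q p
  simp only [dist_comm (q _ _)] at hqp
  rw [Real.dist_eq, abs_sub_le_iff]
  constructor <;> linarith

end MMOT

theorem discretized_MMOT_cost_converges_general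
    (d N : ℕ) (X : Fin N → Set (EuclideanSpace ℝ (Fin d)))
    (hX : ∀ i, IsCompact (X i))
    (c : (∀ i, ↥(X i)) → ℝ) (hc : Continuous c)
    (μ : ∀ i, ProbabilityMeasure ↥(X i))
    (μn : ℕ → ∀ i, ProbabilityMeasure ↥(X i))
    (hconv : ∀ i, Tendsto (fun ν => μn ν i) atTop (𝓝 (μ i))) :
    Tendsto
      (fun ν => sInf { r : ℝ | ∃ γ : ProbabilityMeasure (∀ i, ↥(X i)),
        (∀ i, (γ : Measure (∀ i, ↥(X i))).map (fun x => x i) = μn ν i) ∧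
        r = ∫ x, c x ∂(γ : Measure (∀ i, ↥(X i))) })
      atTop
      (𝓝 (sInf { r : ℝ | ∃ γ : ProbabilityMeasure (∀ i, ↥(X i)),
        (∀ i, (γ : Measure (∀ i, ↥(X i))).map (fun x => x i) = μ i) ∧
        r = ∫ x, c x ∂(γ : Measure (∀ i, ↥(X i))) })) := by
  have : ∀ i, CompactSpace (X i) := fun i => isCompact_iff_compactSpace.1 (hX i)
  have : ∀ i, Nonempty (X i) := fun i => nonempty_of_isProbabilityMeasure (μ i : Measure (X i))
  obtain ⟨C, hC⟩ := isCompact_univ.exists_bound_of_continuousOn hc.continuousOn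
  change Tendsto (fun ν => mmotCost c (μn ν)) atTop (𝓝 (mmotCost c μ))
  refine Metric.tendsto_nhds.2 fun ε hε => ?_
  obtain ⟨δ, hδ, hcδ⟩ := Metric.uniformContinuous_iff.1
    (CompactSpace.uniformContinuous_of_continuous hc) (ε / 2) (half_pos hε)
  choose m f hf hfδ hf0 using fun i =>
    exists_measurable_fin_dist_le_null_frontier (μ i : Measure (X i)) (half_pos hδ)
  have hcf : ∀ x y, (∀ i, f i (x i) = f i (y i)) → |c x - c y| ≤ ε / 2 := fun x y hxy =>
    (hcδ (((dist_pi_le_iff (half_pos hδ).le).2 fun i => hfδ i _ _ (hxy i)).trans_lt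
      (half_lt_self hδ))).le
  have hlim : Tendsto (fun ν => ε / 2 + 2 * C *
      ∑ i, ∑ j, dist (μn ν i (f i ⁻¹' {j})) (μ i (f i ⁻¹' {j}))) atTop (𝓝 (ε / 2)) := by
    simpa using tendsto_const_nhds.add (tendsto_const_nhds.mul (tendsto_finsetSum _ fun i _ =>
      ProbabilityMeasure.tendsto_sum_dist_preimage_singleton (hconv i) (hf0 i)))
  filter_upwards [hlim.eventually (gt_mem_nhds (half_lt_self hε))] with ν hν
  exact (dist_mmotCost_le hc.measurable (fun x => hC x (mem_univ x)) hf
    (half_pos hε).le hcf _ _).trans_lt hν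

/-- first half of Theorem 1 of the paper, justification of the
discretization: if the finitely supported marginals μᵢ^{(ν)} converge weak* to
the marginals μᵢ, then the optimal cost of the discretized multi-marginal
optimal transport problem converges to the optimal cost of the continuous
problem. -/
theorem discretized_MMOT_cost_converges
    (d N : ℕ) (X : Fin N → Set (EuclideanSpace ℝ (Fin d)))
    (hX : ∀ i, IsCompact (X i))
    (c : (∀ i, ↥(X i)) → ℝ) (hc : Continuous c)
    (μ : ∀ i, ProbabilityMeasure ↥(X i))
    (μn : ℕ → ∀ i, ProbabilityMeasure ↥(X i))
    (hfin : ∀ ν i, ∃ s : Finset ↥(X i),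
      (μn ν i : Measure ↥(X i)) ((↑s : Set ↥(X i))ᶜ) = 0)
    (hconv : ∀ i, Tendsto (fun ν => μn ν i) atTop (𝓝 (μ i))) :
    Tendsto
      (fun ν => sInf { r : ℝ | ∃ γ : ProbabilityMeasure (∀ i, ↥(X i)),
        (∀ i, (γ : Measure (∀ i, ↥(X i))).map (fun x => x i) = μn ν i) ∧
        r = ∫ x, c x ∂(γ : Measure (∀ i, ↥(X i))) })
      atTop
      (𝓝 (sInf { r : ℝ | ∃ γ : ProbabilityMeasure (∀ i, ↥(X i)),
        (∀ i, (γ : Measure (∀ i, ↥(X i))).map (fun x => x i) = μ i) ∧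
        r = ∫ x, c x ∂(γ : Measure (∀ i, ↥(X i))) })) :=
  discretized_MMOT_cost_converges_general d N X hX c hc μ μn hconv
end

section
/- Let X = {a_1,…,a_ℓ} be a finite set of ℓ distinct points and N ≥ 1. Then γ ∈ P_sym(X^N) is an extreme point of the convex set P_sym(X^N) if and only if γ = γ_λ for some λ ∈ P_{1/N}(X). Moreover the map λ ↦ γ_λ is injective and the one-point marginal of γ_λ equals λ, so each extreme point of P_sym(X^N) is uniquely recovered from its one-point marginal, and the one-point marginals of the extreme points are exactly the elements of P_{1/N}(X). -/
open Finset

noncomputable def symmetrize (N ℓ : ℕ) (γ : (Fin N → Fin ℓ) → ℝ) : (Fin N → Fin ℓ) → ℝ :=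
  fun x => (1 / (Nat.factorial N : ℝ)) * ∑ σ : Equiv.Perm (Fin N), γ (x ∘ σ)

def IsProbVec {α : Type*} [Fintype α] (p : α → ℝ) : Prop :=
  (∀ x, 0 ≤ p x) ∧ ∑ x, p x = 1

def IsSymmFun (N ℓ : ℕ) (γ : (Fin N → Fin ℓ) → ℝ) : Prop :=
  ∀ (σ : Equiv.Perm (Fin N)) (x : Fin N → Fin ℓ), γ (x ∘ σ) = γ x

def PSym (N ℓ : ℕ) : Set ((Fin N → Fin ℓ) → ℝ) :=
  {γ | IsProbVec γ ∧ IsSymmFun N ℓ γ}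

noncomputable def margOf (N ℓ : ℕ) (x : Fin N → Fin ℓ) : Fin ℓ → ℝ :=
  fun j => ((Finset.univ.filter fun k => x k = j).card : ℝ) / (N : ℝ)

noncomputable def QuantFinset (N ℓ : ℕ) : Finset (Fin ℓ → ℝ) :=
  Finset.image (margOf N ℓ) Finset.univ

noncomputable def gammaLam (N ℓ : ℕ) (lam : Fin ℓ → ℝ) : (Fin N → Fin ℓ) → ℝ :=
  if h : ∃ i : Fin N → Fin ℓ, margOf N ℓ i = lam then
    symmetrize N ℓ (fun x => if x = h.choose then 1 else 0)
  else 0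

noncomputable def marg1 (N ℓ : ℕ) [NeZero N] (γ : (Fin N → Fin ℓ) → ℝ) : Fin ℓ → ℝ :=
  fun j => ∑ x : Fin N → Fin ℓ, if x 0 = j then γ x else 0

noncomputable def marg2 (N ℓ : ℕ) [NeZero N] (γ : (Fin N → Fin ℓ) → ℝ) : Fin ℓ → Fin ℓ → ℝ :=
  fun j k => ∑ x : Fin N → Fin ℓ, if x 0 = j ∧ x 1 = k then γ x else 0

noncomputable def cCoef (N ℓ : ℕ) (c : (Fin N → Fin ℓ) → ℝ) (lam : Fin ℓ → ℝ) : ℝ :=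
  ∑ x : Fin N → Fin ℓ, gammaLam N ℓ lam x * c x


/-!
A symmetric probability vector is constant on the orbits of the permutation action, and these
orbits are exactly the fibres of the empirical measure `margOf`; `gammaLam N ℓ λ` is the uniform
distribution on the fibre over `λ`. Hence every `γ ∈ PSym N ℓ` is the convex combination
`∑ λ, γ(fibre over λ) • γ_λ`, so `PSym N ℓ` is the convex hull of the `γ_λ` and its extreme points
are among them. Conversely, both ends of an open segment through `γ_λ` are supported on the fibre
over `λ`, where symmetry leaves `γ_λ` as the only probability vector. Finally, the one-point
marginal of a symmetric `γ` is the `γ`-average `∑ x, γ x • margOf x` of the empirical measures,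
which is `λ` for `γ_λ`; this also gives injectivity of `λ ↦ γ_λ`.
-/

lemma exists_perm_comp_eq_of_card_fiber_eq {ι α : Type*} [Fintype ι] [DecidableEq α]
    {x y : ι → α} (h : ∀ a, #{k | x k = a} = #{k | y k = a}) :
    ∃ σ : Equiv.Perm ι, x ∘ σ = y := by
  have e : ∀ a, {k // y k = a} ≃ {k // x k = a} := fun a =>
    Fintype.equivOfCardEq (by rw [Fintype.card_subtype, Fintype.card_subtype, h])
  exact ⟨Equiv.ofFiberEquiv e, funext (Equiv.ofFiberEquiv_map e)⟩

lemma eq_zero_left_of_mem_openSegment {α : Type*} {a b z : α → ℝ} (hz : z ∈ openSegment ℝ a b)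
    {x : α} (ha : 0 ≤ a x) (hb : 0 ≤ b x) (hzx : z x = 0) : a x = 0 := by
  obtain ⟨s, t, hs, ht, -, rfl⟩ := hz
  have hsa : s * a x = 0 :=
    ((add_eq_zero_iff_of_nonneg (mul_nonneg hs.le ha) (mul_nonneg ht.le hb)).1 hzx).1
  exact (mul_eq_zero.1 hsa).resolve_left hs.ne'

noncomputable def uniformOn {α : Type*} [DecidableEq α] (s : Finset α) (x : α) : ℝ :=
  if x ∈ s then (#s : ℝ)⁻¹ else 0

lemma IsProbVec.eq_uniformOn {α : Type*} [Fintype α] [DecidableEq α] {p : α → ℝ}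
    {s : Finset α} (hp : IsProbVec p) (hzero : ∀ x ∉ s, p x = 0)
    (hconst : ∀ x ∈ s, ∀ y ∈ s, p x = p y) : p = uniformOn s := by
  have hsum : ∑ x ∈ s, p x = 1 := by
    rw [sum_subset (subset_univ s) fun x _ hx => hzero x hx]
    exact hp.2
  funext x
  by_cases hx : x ∈ s
  · have hcard : (#s : ℝ) * p x = 1 := by
      rw [← hsum, ← nsmul_eq_mul, ← sum_const]
      exact sum_congr rfl fun y hy => hconst x hx y hy
    rw [uniformOn, if_pos hx, eq_inv_of_mul_eq_one_right hcard]
  · rw [uniformOn, if_neg hx, hzero x hx]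

variable {N ℓ : ℕ}

lemma margOf_comp_perm (x : Fin N → Fin ℓ) (σ : Equiv.Perm (Fin N)) :
    margOf N ℓ (x ∘ σ) = margOf N ℓ x := by
  funext j
  simp only [margOf, Function.comp_apply]
  rw [← Fintype.card_subtype, ← Fintype.card_subtype,
    Fintype.card_congr (σ.subtypeEquiv (q := fun k => x k = j) fun _ => Iff.rfl)]

lemma exists_perm_comp_eq_of_margOf_eq [NeZero N] {x y : Fin N → Fin ℓ}
    (h : margOf N ℓ x = margOf N ℓ y) : ∃ σ : Equiv.Perm (Fin N), x ∘ σ = y := by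
  refine exists_perm_comp_eq_of_card_fiber_eq fun j => ?_
  have hj := congrFun h j
  simp only [margOf] at hj
  exact_mod_cast (div_left_inj' (Nat.cast_ne_zero.2 (NeZero.ne N))).1 hj

lemma IsSymmFun.apply_eq_of_margOf_eq [NeZero N] {γ : (Fin N → Fin ℓ) → ℝ}
    (hγ : IsSymmFun N ℓ γ) {x y : Fin N → Fin ℓ} (h : margOf N ℓ x = margOf N ℓ y) :
    γ x = γ y := by
  obtain ⟨σ, rfl⟩ := exists_perm_comp_eq_of_margOf_eq h
  exact (hγ σ x).symm

lemma IsSymmFun.marg1_eq [NeZero N] {γ : (Fin N → Fin ℓ) → ℝ} (hγ : IsSymmFun N ℓ γ) :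
    marg1 N ℓ γ = ∑ x, γ x • margOf N ℓ x := by
  -- by symmetry, every coordinate has the law `marg1 N ℓ γ`
  have hcoord : ∀ k j, (∑ x : Fin N → Fin ℓ, if x k = j then γ x else 0) = marg1 N ℓ γ j := by
    intro k j
    have hswap : Function.Involutive fun x : Fin N → Fin ℓ => x ∘ Equiv.swap 0 k := fun x => by
      funext i
      simp
    refine Fintype.sum_bijective _ hswap.bijective _ _ fun x => ?_
    simp [hγ (Equiv.swap 0 k) x]
  have hN : (N : ℝ) ≠ 0 := Nat.cast_ne_zero.2 (NeZero.ne N)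
  funext j
  calc marg1 N ℓ γ j
      = (N : ℝ)⁻¹ * ∑ k : Fin N, ∑ x : Fin N → Fin ℓ, if x k = j then γ x else 0 := by
        simp [hcoord, hN]
    _ = ∑ x, γ x * margOf N ℓ x j := by
        rw [sum_comm, mul_sum]
        refine sum_congr rfl fun x _ => ?_
        simp only [sum_ite, sum_const, nsmul_eq_mul, margOf]
        ring
    _ = (∑ x, γ x • margOf N ℓ x) j := by simp

lemma convex_PSym : Convex ℝ (PSym N ℓ) := by
  rintro a ⟨⟨ha₀, ha₁⟩, ha⟩ b ⟨⟨hb₀, hb₁⟩, hb⟩ s t hs ht hst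
  refine ⟨⟨fun x => ?_, ?_⟩, fun σ x => ?_⟩
  · simp only [Pi.add_apply, Pi.smul_apply, smul_eq_mul]
    exact add_nonneg (mul_nonneg hs (ha₀ x)) (mul_nonneg ht (hb₀ x))
  · simp only [Pi.add_apply, Pi.smul_apply, smul_eq_mul, sum_add_distrib, ← mul_sum, ha₁, hb₁]
    simpa using hst
  · simp only [Pi.add_apply, Pi.smul_apply, ha σ x, hb σ x]

lemma isSymmFun_symmetrize (γ : (Fin N → Fin ℓ) → ℝ) : IsSymmFun N ℓ (symmetrize N ℓ γ) := by
  intro τ x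
  simp only [symmetrize]
  congr 1
  exact Fintype.sum_equiv (Equiv.mulLeft τ) _ _ fun σ => rfl

lemma symmetrize_nonneg {γ : (Fin N → Fin ℓ) → ℝ} (hγ : ∀ x, 0 ≤ γ x) (x : Fin N → Fin ℓ) :
    0 ≤ symmetrize N ℓ γ x :=
  mul_nonneg (by positivity) (sum_nonneg fun σ _ => hγ _)

lemma sum_symmetrize (γ : (Fin N → Fin ℓ) → ℝ) : ∑ x, symmetrize N ℓ γ x = ∑ x, γ x := by
  have hσ : ∀ σ : Equiv.Perm (Fin N), ∑ x : Fin N → Fin ℓ, γ (x ∘ σ) = ∑ x, γ x := fun σ =>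
    Equiv.sum_comp (σ.symm.arrowCongr (Equiv.refl (Fin ℓ))) γ
  simp only [symmetrize, ← mul_sum]
  rw [sum_comm, sum_congr rfl fun σ _ => hσ σ, sum_const, card_univ, Fintype.card_perm,
    Fintype.card_fin, nsmul_eq_mul, ← mul_assoc, one_div, inv_mul_cancel₀ (by positivity),
    one_mul]

lemma symmetrize_apply_eq_zero {γ : (Fin N → Fin ℓ) → ℝ} {x : Fin N → Fin ℓ}
    (h : ∀ σ : Equiv.Perm (Fin N), γ (x ∘ σ) = 0) : symmetrize N ℓ γ x = 0 := by
  simp only [symmetrize, h, sum_const_zero, mul_zero]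

lemma gammaLam_apply_eq_zero {lam : Fin ℓ → ℝ} {x : Fin N → Fin ℓ} (hx : margOf N ℓ x ≠ lam) :
    gammaLam N ℓ lam x = 0 := by
  rw [gammaLam]
  split_ifs with h
  · refine symmetrize_apply_eq_zero fun σ => if_neg fun hσ => hx ?_
    rw [← margOf_comp_perm x σ, hσ, h.choose_spec]
  · rfl

lemma gammaLam_mem_PSym {lam : Fin ℓ → ℝ} (hlam : lam ∈ QuantFinset N ℓ) :
    gammaLam N ℓ lam ∈ PSym N ℓ := by
  have h : ∃ x₀, margOf N ℓ x₀ = lam := by simpa [QuantFinset] using hlam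
  rw [gammaLam, dif_pos h]
  refine ⟨⟨symmetrize_nonneg fun x => ?_, ?_⟩, isSymmFun_symmetrize _⟩
  · split_ifs <;> norm_num
  · rw [sum_symmetrize, sum_ite_eq']
    simp

noncomputable def margFiber (N ℓ : ℕ) (lam : Fin ℓ → ℝ) : Finset (Fin N → Fin ℓ) :=
  {x | margOf N ℓ x = lam}

lemma eq_uniformOn_margFiber [NeZero N] {γ : (Fin N → Fin ℓ) → ℝ} (hγ : γ ∈ PSym N ℓ)
    {lam : Fin ℓ → ℝ} (hzero : ∀ x, margOf N ℓ x ≠ lam → γ x = 0) :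
    γ = uniformOn (margFiber N ℓ lam) := by
  refine hγ.1.eq_uniformOn (fun x hx => hzero x (by simpa [margFiber] using hx)) ?_
  intro x hx y hy
  simp only [margFiber, mem_filter, mem_univ, true_and] at hx hy
  exact hγ.2.apply_eq_of_margOf_eq (hx.trans hy.symm)

lemma gammaLam_eq_uniformOn [NeZero N] {lam : Fin ℓ → ℝ} (hlam : lam ∈ QuantFinset N ℓ) :
    gammaLam N ℓ lam = uniformOn (margFiber N ℓ lam) :=
  eq_uniformOn_margFiber (gammaLam_mem_PSym hlam) fun _ => gammaLam_apply_eq_zero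

lemma eq_gammaLam_of_eq_zero_off_margFiber [NeZero N] {γ : (Fin N → Fin ℓ) → ℝ}
    (hγ : γ ∈ PSym N ℓ) {lam : Fin ℓ → ℝ} (hlam : lam ∈ QuantFinset N ℓ)
    (hzero : ∀ x, margOf N ℓ x ≠ lam → γ x = 0) : γ = gammaLam N ℓ lam := by
  rw [eq_uniformOn_margFiber hγ hzero, gammaLam_eq_uniformOn hlam]

lemma marg1_gammaLam [NeZero N] {lam : Fin ℓ → ℝ} (hlam : lam ∈ QuantFinset N ℓ) :
    marg1 N ℓ (gammaLam N ℓ lam) = lam := by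
  have hγ := gammaLam_mem_PSym hlam
  calc marg1 N ℓ (gammaLam N ℓ lam)
      = ∑ x, gammaLam N ℓ lam x • margOf N ℓ x := hγ.2.marg1_eq
    _ = ∑ x, gammaLam N ℓ lam x • lam := sum_congr rfl fun x _ => by
        by_cases hx : margOf N ℓ x = lam
        · rw [hx]
        · rw [gammaLam_apply_eq_zero hx, zero_smul, zero_smul]
    _ = lam := by rw [← sum_smul, hγ.1.2, one_smul]

lemma sum_margFiber_smul_gammaLam [NeZero N] {γ : (Fin N → Fin ℓ) → ℝ} (hγ : γ ∈ PSym N ℓ) :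
    ∑ lam ∈ QuantFinset N ℓ, (∑ x ∈ margFiber N ℓ lam, γ x) • gammaLam N ℓ lam = γ := by
  funext y
  have hyQ : margOf N ℓ y ∈ QuantFinset N ℓ := mem_image_of_mem _ (mem_univ y)
  have hy : y ∈ margFiber N ℓ (margOf N ℓ y) := by simp [margFiber]
  have hmass : ∑ x ∈ margFiber N ℓ (margOf N ℓ y), γ x
      = #(margFiber N ℓ (margOf N ℓ y)) * γ y := by
    rw [← nsmul_eq_mul, ← sum_const]
    refine sum_congr rfl fun x hx => hγ.2.apply_eq_of_margOf_eq ?_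
    simpa [margFiber] using hx
  have hcard : (#(margFiber N ℓ (margOf N ℓ y)) : ℝ) ≠ 0 :=
    Nat.cast_ne_zero.2 (card_ne_zero_of_mem hy)
  rw [Finset.sum_apply, sum_eq_single (margOf N ℓ y)]
  · rw [Pi.smul_apply, smul_eq_mul, gammaLam_eq_uniformOn hyQ, uniformOn, if_pos hy, hmass,
      mul_right_comm, mul_inv_cancel₀ hcard, one_mul]
  · intro lam _ hne
    rw [Pi.smul_apply, gammaLam_apply_eq_zero (Ne.symm hne), smul_zero]
  · exact fun h => absurd hyQ h

lemma convexHull_gammaLam [NeZero N] :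
    convexHull ℝ (gammaLam N ℓ '' QuantFinset N ℓ) = PSym N ℓ := by
  refine (convexHull_min ?_ convex_PSym).antisymm fun γ hγ => ?_
  · rintro _ ⟨lam, hlam, rfl⟩
    exact gammaLam_mem_PSym hlam
  · rw [← sum_margFiber_smul_gammaLam hγ]
    refine (convex_convexHull ℝ _).sum_mem (fun lam _ => sum_nonneg fun x _ => hγ.1.1 x) ?_
      fun lam hlam => subset_convexHull ℝ _ ⟨lam, hlam, rfl⟩
    exact (sum_fiberwise_of_maps_to (fun x _ => mem_image_of_mem _ (mem_univ x)) γ).trans hγ.1.2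

lemma gammaLam_mem_extremePoints [NeZero N] {lam : Fin ℓ → ℝ} (hlam : lam ∈ QuantFinset N ℓ) :
    gammaLam N ℓ lam ∈ Set.extremePoints ℝ (PSym N ℓ) := by
  refine mem_extremePoints_iff_left.2 ⟨gammaLam_mem_PSym hlam, fun a ha b hb hab => ?_⟩
  exact eq_gammaLam_of_eq_zero_off_margFiber ha hlam fun x hx =>
    eq_zero_left_of_mem_openSegment hab (ha.1.1 x) (hb.1.1 x) (gammaLam_apply_eq_zero hx)

/-- The extreme points of P_sym(X^N) are exactly the measures γ_λ,
λ ∈ P_{1/N}(X); the map λ ↦ γ_λ is injective on P_{1/N}(X) and the one-point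
marginal of γ_λ equals λ. -/
theorem extreme_points_of_PSym (ℓ N : ℕ) [NeZero N] (γ : (Fin N → Fin ℓ) → ℝ) :
    (γ ∈ Set.extremePoints ℝ (PSym N ℓ) ↔
      ∃ lam ∈ QuantFinset N ℓ, γ = gammaLam N ℓ lam)
    ∧ Set.InjOn (gammaLam N ℓ) ↑(QuantFinset N ℓ)
    ∧ ∀ lam ∈ QuantFinset N ℓ, marg1 N ℓ (gammaLam N ℓ lam) = lam := by
  refine ⟨⟨fun hγ => ?_, ?_⟩, fun lam₁ h₁ lam₂ h₂ heq => ?_, fun lam => marg1_gammaLam⟩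
  · rw [← convexHull_gammaLam] at hγ
    obtain ⟨lam, hlam, rfl⟩ := extremePoints_convexHull_subset hγ
    exact ⟨lam, hlam, rfl⟩
  · rintro ⟨lam, hlam, rfl⟩
    exact gammaLam_mem_extremePoints hlam
  · rw [← marg1_gammaLam h₁, ← marg1_gammaLam h₂, heq]
end

section
/- Let X = {a_1,…,a_ℓ} be a finite set of ℓ distinct points, N ≥ 1, c : X^N → ℝ a symmetric cost function, and λ* ∈ P(X) a marginal (identified with the vector in ℝ^ℓ with components λ*({a_i})). Then the master problem — minimize Σ_{λ ∈ P_{1/N}(X)} c_λ α_λ over α = (α_λ) subject to Σ_{λ ∈ P_{1/N}(X)} α_λ λ = λ* and α ≥ 0 — admits an optimizer α* with at most ℓ nonzero entries; that is, there exists α* ≥ 0 with Σ_λ α*_λ λ = λ*, with at most ℓ indices λ satisfying α*_λ ≠ 0, such that Σ_λ c_λ α*_λ ≤ Σ_λ c_λ α_λ for every α ≥ 0 with Σ_λ α_λ λ = λ*. -/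
open Finset

theorem lp_sparse (ℓ : ℕ) (Q : Finset (Fin ℓ → ℝ))
    (hQ1 : ∀ lam ∈ Q, ∑ j, lam j = 1)
    (cc : (Fin ℓ → ℝ) → ℝ) (lamStar : Fin ℓ → ℝ)
    (α₀ : (Fin ℓ → ℝ) → ℝ) (h₀1 : ∀ lam, 0 ≤ α₀ lam)
    (h₀2 : ∀ lam ∉ Q, α₀ lam = 0)
    (h₀3 : ∀ j, ∑ lam ∈ Q, α₀ lam * lam j = lamStar j) :
    ∃ α : (Fin ℓ → ℝ) → ℝ,
      (∀ lam, 0 ≤ α lam) ∧ (∀ lam ∉ Q, α lam = 0) ∧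
      (∀ j, ∑ lam ∈ Q, α lam * lam j = lamStar j) ∧
      (∃ s : Finset (Fin ℓ → ℝ), s.card ≤ ℓ ∧ ∀ lam ∉ s, α lam = 0) ∧
      ∀ α' : (Fin ℓ → ℝ) → ℝ, (∀ lam, 0 ≤ α' lam) → (∀ lam ∉ Q, α' lam = 0) →
        (∀ j, ∑ lam ∈ Q, α' lam * lam j = lamStar j) →
        ∑ lam ∈ Q, cc lam * α lam ≤ ∑ lam ∈ Q, cc lam * α' lam := by
  classical
  set F : Set ((Fin ℓ → ℝ) → ℝ) := {α | (∀ lam, 0 ≤ α lam) ∧ (∀ lam ∉ Q, α lam = 0) ∧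
      ∀ j, ∑ lam ∈ Q, α lam * lam j = lamStar j} with hFdef
  set f : ((Fin ℓ → ℝ) → ℝ) → ℝ := fun α => ∑ lam ∈ Q, cc lam * α lam with hfdef
  have hFne : F.Nonempty := ⟨α₀, h₀1, h₀2, h₀3⟩
  set M := ∑ j, lamStar j with hM
  have hmass : ∀ α ∈ F, ∑ lam ∈ Q, α lam = M := by
    intro α hα
    have h1 : ∑ lam ∈ Q, α lam = ∑ lam ∈ Q, ∑ j, α lam * lam j := by
      refine Finset.sum_congr rfl fun lam hlam => ?_
      rw [← Finset.mul_sum, hQ1 lam hlam, mul_one]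
    rw [h1, Finset.sum_comm]
    exact Finset.sum_congr rfl fun j _ => hα.2.2 j
  have hsub : F ⊆ Set.pi Set.univ (fun lam => if lam ∈ Q then Set.Icc (0:ℝ) M else {0}) := by
    intro α hα lam _
    by_cases h : lam ∈ Q
    · simp only [h, if_true, Set.mem_Icc]
      refine ⟨hα.1 lam, ?_⟩
      calc α lam ≤ ∑ lam ∈ Q, α lam := Finset.single_le_sum (fun i _ => hα.1 i) h
        _ = M := hmass α hα
    · simp [h, hα.2.1 lam h]
  have hK : IsCompact (Set.pi Set.univ fun lam => if lam ∈ Q then Set.Icc (0:ℝ) M else {0}) :=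
    isCompact_univ_pi fun lam => by split_ifs; exacts [isCompact_Icc, isCompact_singleton]
  have hFclosed : IsClosed F := by
    have h1 : IsClosed {α : (Fin ℓ → ℝ) → ℝ | ∀ lam, 0 ≤ α lam} := by
      rw [Set.setOf_forall]
      exact isClosed_iInter fun lam => isClosed_le continuous_const (continuous_apply lam)
    have h2 : IsClosed {α : (Fin ℓ → ℝ) → ℝ | ∀ lam ∉ Q, α lam = 0} := by
      rw [Set.setOf_forall]
      refine isClosed_iInter fun lam => ?_
      by_cases h : lam ∈ Q
      · simp [h]
      · simpa [h] using isClosed_eq (continuous_apply lam) continuous_const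
    have h3 : IsClosed {α : (Fin ℓ → ℝ) → ℝ | ∀ j, ∑ lam ∈ Q, α lam * lam j = lamStar j} := by
      rw [Set.setOf_forall]
      exact isClosed_iInter fun j => isClosed_eq
        (continuous_finset_sum _ fun lam _ => (continuous_apply lam).mul continuous_const)
        continuous_const
    exact h1.inter (h2.inter h3)
  have hFcomp : IsCompact F := hK.of_isClosed_subset hFclosed hsub
  have hfc : Continuous f := continuous_finset_sum _ fun lam _ =>
    continuous_const.mul (continuous_apply lam)
  obtain ⟨αm, hαmF, hαmmin⟩ := hFcomp.exists_isMinOn hFne hfc.continuousOn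
  set S : Set ℕ := {n | ∃ α, α ∈ F ∧ IsMinOn f F α ∧ (Q.filter fun lam => α lam ≠ 0).card = n}
    with hSdef
  have hSne : S.Nonempty := ⟨_, αm, hαmF, hαmmin, rfl⟩
  obtain ⟨α, hαF, hαmin, hcard⟩ := Nat.sInf_mem hSne
  have hminimal : ∀ β ∈ F, IsMinOn f F β → sInf S ≤ (Q.filter fun lam => β lam ≠ 0).card :=
    fun β hb1 hb2 => Nat.sInf_le ⟨β, hb1, hb2, rfl⟩
  set s : Finset (Fin ℓ → ℝ) := Q.filter fun lam => α lam ≠ 0 with hsdef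
  have hsQ : s ⊆ Q := Finset.filter_subset _ _
  have hspos : ∀ lam ∈ s, 0 < α lam := by
    intro lam hlam
    have h := (Finset.mem_filter.mp hlam).2
    exact lt_of_le_of_ne (hαF.1 lam) (Ne.symm h)
  -- main claim: s.card ≤ ℓ
  have hcardle : s.card ≤ ℓ := by
    by_contra hgt
    push_neg at hgt
    have hnli : ¬ LinearIndependent ℝ (fun i : ↥s => (i : Fin ℓ → ℝ)) := by
      intro hli
      have h := hli.fintype_card_le_finrank
      rw [Fintype.card_coe, Module.finrank_fin_fun] at h
      omega
    obtain ⟨g, hg0, i₀, hgi₀⟩ := Fintype.not_linearIndependent_iff.mp hnli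
    set d : (Fin ℓ → ℝ) → ℝ := fun lam => if h : lam ∈ s then g ⟨lam, h⟩ else 0 with hddef
    have hd_off : ∀ lam ∉ s, d lam = 0 := fun lam h => dif_neg h
    have hd_on : ∀ i : ↥s, d ↑i = g i := fun i => by
      simp only [hddef, dif_pos i.2]
    have hdsum : ∀ j, ∑ lam ∈ Q, d lam * lam j = 0 := by
      intro j
      rw [← Finset.sum_subset hsQ (fun lam _ h => by rw [hd_off lam h, zero_mul])]
      have h := congrFun hg0 j
      rw [Finset.sum_apply] at h
      simp only [Pi.smul_apply, smul_eq_mul, Pi.zero_apply] at h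
      calc ∑ lam ∈ s, d lam * lam j = ∑ i ∈ s.attach, d ↑i * (↑i : Fin ℓ → ℝ) j :=
            (Finset.sum_attach s _).symm
        _ = ∑ i : ↥s, g i * (↑i : Fin ℓ → ℝ) j := by
            rw [← Finset.univ_eq_attach]
            exact Finset.sum_congr rfl fun i _ => by rw [hd_on i]
        _ = 0 := h
    have hdtot : ∑ lam ∈ Q, d lam = 0 := by
      have h1 : ∑ lam ∈ Q, d lam = ∑ lam ∈ Q, ∑ j, d lam * lam j := by
        refine Finset.sum_congr rfl fun lam hlam => ?_
        rw [← Finset.mul_sum, hQ1 lam hlam, mul_one]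
      rw [h1, Finset.sum_comm]
      simp [hdsum]
    -- directional choice
    set e : (Fin ℓ → ℝ) → ℝ :=
      if 0 ≤ ∑ lam ∈ Q, cc lam * d lam then d else fun lam => -(d lam) with hedef
    have he_off : ∀ lam ∉ s, e lam = 0 := by
      intro lam h
      by_cases hc : 0 ≤ ∑ lam ∈ Q, cc lam * d lam <;> simp [hedef, hc, hd_off lam h]
    have hesum : ∀ j, ∑ lam ∈ Q, e lam * lam j = 0 := by
      intro j
      by_cases hc : 0 ≤ ∑ lam ∈ Q, cc lam * d lam <;>
        simp [hedef, hc, hdsum j, Finset.sum_neg_distrib, neg_mul]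
    have hetot : ∑ lam ∈ Q, e lam = 0 := by
      by_cases hc : 0 ≤ ∑ lam ∈ Q, cc lam * d lam <;>
        simp [hedef, hc, hdtot, Finset.sum_neg_distrib]
    have heC : 0 ≤ ∑ lam ∈ Q, cc lam * e lam := by
      by_cases hc : 0 ≤ ∑ lam ∈ Q, cc lam * d lam
      · simpa [hedef, hc] using hc
      · push_neg at hc
        have : ∑ lam ∈ Q, cc lam * (fun lam => -(d lam)) lam
            = -(∑ lam ∈ Q, cc lam * d lam) := by
          simp [mul_neg, Finset.sum_neg_distrib]
        simp only [hedef, if_neg (not_le.mpr hc)]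
        rw [this]
        linarith
    have hene : e ↑i₀ ≠ 0 := by
      have hd : d ↑i₀ ≠ 0 := by rw [hd_on i₀]; exact hgi₀
      by_cases hc : 0 ≤ ∑ lam ∈ Q, cc lam * d lam <;> simp [hedef, hc, hd]
    have hepos : ∃ lam ∈ Q, 0 < e lam := by
      by_contra h
      push_neg at h
      have hall := (Finset.sum_eq_zero_iff_of_nonpos h).mp hetot
      exact hene (hall _ (hsQ i₀.2))
    set T : Finset (Fin ℓ → ℝ) := Q.filter fun lam => 0 < e lam with hTdef
    have hTne : T.Nonempty := by
      obtain ⟨lam, h1, h2⟩ := hepos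
      exact ⟨lam, Finset.mem_filter.mpr ⟨h1, h2⟩⟩
    have hT_s : ∀ lam ∈ T, lam ∈ s := by
      intro lam hlam
      by_contra h
      exact absurd (he_off lam h) (ne_of_gt (Finset.mem_filter.mp hlam).2)
    set t : ℝ := T.inf' hTne (fun lam => α lam / e lam) with htdef
    have htpos : 0 < t := by
      rw [htdef, Finset.lt_inf'_iff]
      intro lam hlam
      exact div_pos (hspos lam (hT_s lam hlam)) (Finset.mem_filter.mp hlam).2
    obtain ⟨lam₀, hlam₀T, hlam₀⟩ := Finset.exists_mem_eq_inf' hTne (fun lam => α lam / e lam)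
    set α' : (Fin ℓ → ℝ) → ℝ := fun lam => α lam - t * e lam with hα'def
    have hα'nonneg : ∀ lam, 0 ≤ α' lam := by
      intro lam
      by_cases hp : 0 < e lam
      · by_cases hQl : lam ∈ Q
        · have hmemT : lam ∈ T := Finset.mem_filter.mpr ⟨hQl, hp⟩
          have hle : t ≤ α lam / e lam := Finset.inf'_le _ hmemT
          have := (le_div_iff₀ hp).mp hle
          simp only [hα'def]
          linarith
        · exact absurd (he_off lam (fun hls => hQl (hsQ hls))) (ne_of_gt hp)
      · push_neg at hp
        have : t * e lam ≤ 0 := mul_nonpos_of_nonneg_of_nonpos htpos.le hp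
        have h0 := hαF.1 lam
        simp only [hα'def]
        linarith
    have hα'off : ∀ lam ∉ Q, α' lam = 0 := by
      intro lam h
      simp [hα'def, hαF.2.1 lam h, he_off lam (fun hls => h (hsQ hls))]
    have hα'marg : ∀ j, ∑ lam ∈ Q, α' lam * lam j = lamStar j := by
      intro j
      simp only [hα'def, sub_mul, Finset.sum_sub_distrib, mul_assoc]
      rw [← Finset.mul_sum, hesum j, mul_zero, sub_zero]
      exact hαF.2.2 j
    have hα'F : α' ∈ F := ⟨hα'nonneg, hα'off, hα'marg⟩
    have hfα' : f α' = f α - t * ∑ lam ∈ Q, cc lam * e lam := by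
      simp only [hfdef, hα'def, mul_sub, Finset.sum_sub_distrib, Finset.mul_sum]
      congr 1
      exact Finset.sum_congr rfl fun lam _ => by ring
    have hfle : f α' ≤ f α := by
      rw [hfα']
      nlinarith
    have hfge : f α ≤ f α' := hαmin hα'F
    have hfeq : f α' = f α := le_antisymm hfle hfge
    have hα'min : IsMinOn f F α' := by
      intro y hy
      calc f α' = f α := hfeq
        _ ≤ f y := hαmin hy
    -- support shrinks
    have hlam₀s : lam₀ ∈ s := hT_s lam₀ hlam₀T
    have hlam₀e : 0 < e lam₀ := (Finset.mem_filter.mp hlam₀T).2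
    have hα'lam₀ : α' lam₀ = 0 := by
      have ht' : t = α lam₀ / e lam₀ := hlam₀
      simp only [hα'def, ht']
      rw [div_mul_cancel₀ _ (ne_of_gt hlam₀e), sub_self]
    have hsuppsub : (Q.filter fun lam => α' lam ≠ 0) ⊆ s.erase lam₀ := by
      intro lam hlam
      obtain ⟨hlQ, hlne⟩ := Finset.mem_filter.mp hlam
      have hls : lam ∈ s := by
        by_contra h
        have h1 : α lam = 0 := by
          by_contra h2
          exact h (Finset.mem_filter.mpr ⟨hlQ, h2⟩)
        have h2 : e lam = 0 := he_off lam h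
        exact hlne (by simp [hα'def, h1, h2])
      have hlne0 : lam ≠ lam₀ := by
        intro hcon
        rw [hcon] at hlne
        exact hlne hα'lam₀
      exact Finset.mem_erase.mpr ⟨hlne0, hls⟩
    have hcard' : (Q.filter fun lam => α' lam ≠ 0).card ≤ s.card - 1 := by
      calc (Q.filter fun lam => α' lam ≠ 0).card ≤ (s.erase lam₀).card :=
            Finset.card_le_card hsuppsub
        _ = s.card - 1 := Finset.card_erase_of_mem hlam₀s
    have hge := hminimal α' hα'F hα'min
    have hspos' : 0 < s.card := Finset.card_pos.mpr ⟨lam₀, hlam₀s⟩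
    omega
  -- assemble
  refine ⟨α, hαF.1, hαF.2.1, hαF.2.2, ⟨s, hcardle, ?_⟩, ?_⟩
  · intro lam hlam
    by_cases h : lam ∈ Q
    · by_contra h2
      exact hlam (Finset.mem_filter.mpr ⟨h, h2⟩)
    · exact hαF.2.1 lam h
  · intro α' h1 h2 h3
    exact hαmin (⟨h1, h2, h3⟩ : α' ∈ F)


/-- the master problem admits an optimizer with at most ℓ nonzero
entries (sparsity of optimizers, Theorem 2 of the paper). -/
theorem sparse_optimizer_exists (ℓ N : ℕ) [NeZero N]
    (c : (Fin N → Fin ℓ) → ℝ) (hc : IsSymmFun N ℓ c)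
    (lamStar : Fin ℓ → ℝ) (hpos : ∀ j, 0 ≤ lamStar j) (hsum : ∑ j, lamStar j = 1) :
    ∃ α : (Fin ℓ → ℝ) → ℝ,
      (∀ lam, 0 ≤ α lam) ∧
      (∀ lam ∉ QuantFinset N ℓ, α lam = 0) ∧
      (∀ j, ∑ lam ∈ QuantFinset N ℓ, α lam * lam j = lamStar j) ∧
      (∃ s : Finset (Fin ℓ → ℝ), s.card ≤ ℓ ∧ ∀ lam ∉ s, α lam = 0) ∧
      ∀ α' : (Fin ℓ → ℝ) → ℝ,
        (∀ lam, 0 ≤ α' lam) →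
        (∀ lam ∉ QuantFinset N ℓ, α' lam = 0) →
        (∀ j, ∑ lam ∈ QuantFinset N ℓ, α' lam * lam j = lamStar j) →
        ∑ lam ∈ QuantFinset N ℓ, cCoef N ℓ c lam * α lam ≤
          ∑ lam ∈ QuantFinset N ℓ, cCoef N ℓ c lam * α' lam := by
  classical
  have hN : (N : ℝ) ≠ 0 := Nat.cast_ne_zero.mpr (NeZero.ne N)
  have hQ1 : ∀ lam ∈ QuantFinset N ℓ, ∑ j, lam j = 1 := by
    intro lam hlam
    obtain ⟨x, -, rfl⟩ := Finset.mem_image.mp hlam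
    have hcard : ∑ j, ((Finset.univ.filter fun k => x k = j).card : ℝ) = (N : ℝ) := by
      rw [← Nat.cast_sum]
      congr 1
      rw [← Finset.card_eq_sum_card_fiberwise (fun k _ => Finset.mem_univ (x k))]
      simp
    unfold margOf
    rw [← Finset.sum_div, hcard, div_self hN]
  have heval : ∀ i j : Fin ℓ, margOf N ℓ (fun _ => i) j = if i = j then 1 else 0 := by
    intro i j
    unfold margOf
    by_cases h : i = j
    · rw [if_pos h]
      have he : (Finset.univ.filter fun _ : Fin N => i = j) = Finset.univ :=
        Finset.filter_true_of_mem fun _ _ => h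
      have : ((Finset.univ.filter fun k : Fin N => (fun _ => i) k = j).card : ℝ) = (N : ℝ) := by
        rw [show (Finset.univ.filter fun k : Fin N => (fun _ => i) k = j)
            = Finset.univ.filter fun _ : Fin N => i = j from rfl, he]
        simp
      rw [this, div_self hN]
    · rw [if_neg h]
      have he : (Finset.univ.filter fun _ : Fin N => i = j) = ∅ :=
        Finset.filter_false_of_mem fun _ _ => h
      rw [show (Finset.univ.filter fun k : Fin N => (fun _ => i) k = j)
          = Finset.univ.filter fun _ : Fin N => i = j from rfl, he]
      simp
  have heQ : ∀ i : Fin ℓ, margOf N ℓ (fun _ => i) ∈ QuantFinset N ℓ := fun i =>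
    Finset.mem_image.mpr ⟨fun _ => i, Finset.mem_univ _, rfl⟩
  set α₀ : (Fin ℓ → ℝ) → ℝ :=
    fun lam => ∑ i, if lam = margOf N ℓ (fun _ => i) then lamStar i else 0 with hα₀
  have h₀1 : ∀ lam, 0 ≤ α₀ lam := by
    intro lam
    refine Finset.sum_nonneg fun i _ => ?_
    split_ifs
    · exact hpos i
    · exact le_refl 0
  have h₀2 : ∀ lam ∉ QuantFinset N ℓ, α₀ lam = 0 := by
    intro lam hlam
    refine Finset.sum_eq_zero fun i _ => ?_
    rw [if_neg]
    intro h
    exact hlam (h ▸ heQ i)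
  have h₀3 : ∀ j, ∑ lam ∈ QuantFinset N ℓ, α₀ lam * lam j = lamStar j := by
    intro j
    have step1 : ∀ lam ∈ QuantFinset N ℓ, α₀ lam * lam j
        = ∑ i, if lam = margOf N ℓ (fun _ => i) then lamStar i * lam j else 0 := by
      intro lam _
      rw [hα₀, Finset.sum_mul]
      exact Finset.sum_congr rfl fun i _ => by rw [ite_mul, zero_mul]
    rw [Finset.sum_congr rfl step1, Finset.sum_comm]
    have step2 : ∀ i : Fin ℓ,
        (∑ lam ∈ QuantFinset N ℓ, if lam = margOf N ℓ (fun _ => i)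
          then lamStar i * lam j else 0)
        = lamStar i * (if i = j then 1 else 0) := by
      intro i
      rw [Finset.sum_ite_eq' (QuantFinset N ℓ) (margOf N ℓ (fun _ => i))
        (fun lam => lamStar i * lam j), if_pos (heQ i), heval i j]
    rw [Finset.sum_congr rfl (fun i _ => step2 i)]
    simp [mul_ite]
  obtain ⟨α, h1, h2, h3, h4, h5⟩ :=
    lp_sparse ℓ (QuantFinset N ℓ) hQ1 (cCoef N ℓ c) lamStar α₀ h₀1 h₀2 h₀3
  exact ⟨α, h1, h2, h3, h4, h5⟩
end

section
/- Let X = {a_1,…,a_ℓ} be a finite set of ℓ distinct points, N ≥ 1, and λ* ∈ P(X). Suppose α = (α_λ)_{λ ∈ P_{1/N}(X)} satisfies α ≥ 0, Σ_λ α_λ λ = λ*, and α has at most ℓ nonzero entries. Then the plan γ = Σ_λ α_λ γ_λ is a quasi-Monge state: there exist maps T_1,…,T_N : X → X and weights μ_1,…,μ_ℓ ≥ 0 with Σ_{ν=1}^ℓ μ_ν = 1 such that γ = S_N Σ_{ν=1}^ℓ μ_ν δ_{T_1(a_ν)} ⊗ … ⊗ δ_{T_N(a_ν)}. -/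
open Finset

lemma sum_fin_extend {M : Type*} [AddCommMonoid M] {ℓ n : ℕ} (h : n ≤ ℓ)
    (F : Fin ℓ → M) (g : Fin n → M)
    (h1 : ∀ (ν : Fin ℓ) (hν : (ν : ℕ) < n), F ν = g ⟨ν, hν⟩)
    (h0 : ∀ ν : Fin ℓ, ¬ (ν : ℕ) < n → F ν = 0) :
    ∑ ν, F ν = ∑ m, g m := by
  classical
  have hmap : ∑ ν ∈ Finset.univ.map (Fin.castLEEmb h), F ν = ∑ ν, F ν := by
    refine Finset.sum_subset (Finset.subset_univ _) ?_
    intro ν _ hν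
    refine h0 ν ?_
    intro hlt
    exact hν (by
      simp only [Finset.mem_map, Finset.mem_univ, true_and]
      exact ⟨⟨ν, hlt⟩, rfl⟩)
  rw [← hmap, Finset.sum_map]
  refine Finset.sum_congr rfl ?_
  intro m _
  have := h1 ((Fin.castLEEmb h) m) m.isLt
  simpa using this

lemma margOf_sum (N ℓ : ℕ) [NeZero N] (x : Fin N → Fin ℓ) :
    ∑ j, margOf N ℓ x j = 1 := by
  classical
  unfold margOf
  rw [← Finset.sum_div]
  have hcard : (Finset.univ : Finset (Fin N)).card
      = ∑ j : Fin ℓ, (Finset.univ.filter fun k => x k = j).card :=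
    Finset.card_eq_sum_card_fiberwise (fun a _ => Finset.mem_univ (x a))
  have : (∑ j : Fin ℓ, ((Finset.univ.filter fun k => x k = j).card : ℝ)) = (N : ℝ) := by
    rw [← Nat.cast_sum, ← hcard, Finset.card_univ, Fintype.card_fin]
  rw [this, div_self (Nat.cast_ne_zero.mpr (NeZero.ne N))]

lemma symmetrize_linear {ι : Type*} (s : Finset ι) (N ℓ : ℕ) (a : ι → ℝ)
    (g : ι → (Fin N → Fin ℓ) → ℝ) (x : Fin N → Fin ℓ) :
    symmetrize N ℓ (fun y => ∑ i ∈ s, a i * g i y) x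
      = ∑ i ∈ s, a i * symmetrize N ℓ (g i) x := by
  simp only [symmetrize, Finset.mul_sum]
  rw [Finset.sum_comm]
  refine Finset.sum_congr rfl fun i _ => ?_
  refine Finset.sum_congr rfl fun σ _ => ?_
  ring

/-- a feasible coefficient vector with at most ℓ nonzero entries
induces a quasi-Monge state γ = S_N Σ_ν μ_ν δ_{T_1(a_ν)} ⊗ … ⊗ δ_{T_N(a_ν)}. -/
theorem sparse_plan_is_quasiMonge (ℓ N : ℕ) [NeZero N]
    (lamStar : Fin ℓ → ℝ) (hls_pos : ∀ j, 0 ≤ lamStar j) (hls_sum : ∑ j, lamStar j = 1)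
    (α : (Fin ℓ → ℝ) → ℝ)
    (hα_pos : ∀ lam, 0 ≤ α lam)
    (hα_supp : ∀ lam ∉ QuantFinset N ℓ, α lam = 0)
    (hα_marg : ∀ j, ∑ lam ∈ QuantFinset N ℓ, α lam * lam j = lamStar j)
    (hα_sparse : ∃ s : Finset (Fin ℓ → ℝ), s.card ≤ ℓ ∧ ∀ lam ∉ s, α lam = 0) :
    ∃ (T : Fin N → Fin ℓ → Fin ℓ) (μ : Fin ℓ → ℝ),
      (∀ ν, 0 ≤ μ ν) ∧ (∑ ν, μ ν = 1) ∧
      ∀ x, (∑ lam ∈ QuantFinset N ℓ, α lam * gammaLam N ℓ lam x)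
        = symmetrize N ℓ
            (fun y => ∑ ν : Fin ℓ, μ ν * (if y = (fun k => T k ν) then 1 else 0)) x := by
  classical
  obtain ⟨s, hs_card, hs_zero⟩ := hα_sparse
  set Q := QuantFinset N ℓ with hQdef
  set t : Finset (Fin ℓ → ℝ) := Q.filter (fun lam => α lam ≠ 0) with htdef
  have htQ : t ⊆ Q := Finset.filter_subset _ _
  have ht_card : t.card ≤ ℓ := by
    have hts : t ⊆ s := by
      intro lam hl
      by_contra hns
      exact (Finset.mem_filter.mp hl).2 (hs_zero lam hns)
    exact le_trans (Finset.card_le_card hts) hs_card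
  have hexQ : ∀ lam ∈ Q, ∃ i : Fin N → Fin ℓ, margOf N ℓ i = lam := by
    intro lam hl
    obtain ⟨i, _, hi⟩ := Finset.mem_image.mp hl
    exact ⟨i, hi⟩
  let e : Fin t.card ≃ ↥t := t.equivFin.symm
  let lamOf : Fin t.card → (Fin ℓ → ℝ) := fun m => (e m : Fin ℓ → ℝ)
  have hlam_mem : ∀ m, lamOf m ∈ t := fun m => (e m).2
  have hex : ∀ m, ∃ i, margOf N ℓ i = lamOf m := fun m => hexQ _ (htQ (hlam_mem m))
  let ptOf : Fin t.card → (Fin N → Fin ℓ) := fun m => (hex m).choose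
  -- sum over t equals sum over Fin t.card
  have hsum_t : ∀ f : (Fin ℓ → ℝ) → ℝ,
      ∑ m : Fin t.card, f (lamOf m) = ∑ lam ∈ t, f lam := by
    intro f
    rw [← Finset.sum_coe_sort t f]
    exact Equiv.sum_comp e (fun a : ↥t => f (a : Fin ℓ → ℝ))
  -- sum over Q equals sum over t when multiplied by α
  have hsum_Qt : ∀ f : (Fin ℓ → ℝ) → ℝ,
      ∑ lam ∈ Q, α lam * f lam = ∑ lam ∈ t, α lam * f lam := by
    intro f
    refine (Finset.sum_subset htQ ?_).symm
    intro lam hlQ hlt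
    have : α lam = 0 := by
      by_contra hne
      exact hlt (Finset.mem_filter.mpr ⟨hlQ, hne⟩)
    rw [this, zero_mul]
  -- total mass of α is 1
  have hα_one : ∑ lam ∈ Q, α lam = 1 := by
    have h1 : ∀ lam ∈ Q, ∑ j, lam j = 1 := by
      intro lam hl
      obtain ⟨i, hi⟩ := hexQ lam hl
      rw [← hi]
      exact margOf_sum N ℓ i
    calc ∑ lam ∈ Q, α lam = ∑ lam ∈ Q, α lam * (∑ j, lam j) := by
          refine Finset.sum_congr rfl ?_
          intro lam hl
          rw [h1 lam hl, mul_one]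
      _ = ∑ lam ∈ Q, ∑ j, α lam * lam j := by
          refine Finset.sum_congr rfl ?_
          intro lam _
          rw [Finset.mul_sum]
      _ = ∑ j, ∑ lam ∈ Q, α lam * lam j := Finset.sum_comm
      _ = ∑ j, lamStar j := by
          refine Finset.sum_congr rfl ?_
          intro j _
          exact hα_marg j
      _ = 1 := hls_sum
  refine ⟨fun k ν => if h : (ν : ℕ) < t.card then ptOf ⟨ν, h⟩ k else ν,
          fun ν => if h : (ν : ℕ) < t.card then α (lamOf ⟨ν, h⟩) else 0, ?_, ?_, ?_⟩
  · intro ν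
    dsimp only
    by_cases h : (ν : ℕ) < t.card
    · rw [dif_pos h]; exact hα_pos _
    · rw [dif_neg h]
  · rw [sum_fin_extend ht_card _ (fun m => α (lamOf m))
      (fun ν hν => dif_pos hν) (fun ν hν => dif_neg hν)]
    have h2 := hsum_Qt (fun _ => 1)
    simp only [mul_one] at h2
    rw [hsum_t (fun lam => α lam), ← h2]
    exact hα_one
  · intro x
    -- pointwise identity for the inner sums
    have hpt : ∀ y : Fin N → Fin ℓ,
        (∑ ν : Fin ℓ, (if h : (ν : ℕ) < t.card then α (lamOf ⟨ν, h⟩) else 0) *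
          (if y = (fun k => (if h : (ν : ℕ) < t.card then ptOf ⟨ν, h⟩ k else ν)) then 1 else 0))
        = ∑ m : Fin t.card, α (lamOf m) * (if y = ptOf m then 1 else 0) := by
      intro y
      refine sum_fin_extend ht_card _
        (fun m => α (lamOf m) * (if y = ptOf m then 1 else 0)) ?_ ?_
      · intro ν hν
        rw [dif_pos hν]
        congr 1
        simp only [dif_pos hν]
      · intro ν hν
        rw [dif_neg hν, zero_mul]
    -- rewrite LHS
    have hLHS : ∑ lam ∈ Q, α lam * gammaLam N ℓ lam x
        = ∑ m : Fin t.card, α (lamOf m) *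
            symmetrize N ℓ (fun y => if y = ptOf m then 1 else 0) x := by
      rw [hsum_Qt (fun lam => gammaLam N ℓ lam x),
        ← hsum_t (fun lam => α lam * gammaLam N ℓ lam x)]
      refine Finset.sum_congr rfl ?_
      intro m _
      congr 1
      rw [gammaLam, dif_pos (hex m)]
    have hγ := funext hpt
    rw [hLHS, hγ, symmetrize_linear]
end

section
/- Let X = {a_1,…,a_ℓ} be a finite set of ℓ distinct points and N ≥ 2. For any λ ∈ P_{1/N}(X), the two-point marginal of γ_λ is given by M_2γ_λ = (N/(N−1)) λ ⊗ λ − (1/(N−1)) Σ_{i=1}^ℓ λ({a_i}) δ_{a_i} ⊗ δ_{a_i}; equivalently, (M_2γ_λ)(a_i,a_j) = (N/(N−1)) λ({a_i}) λ({a_j}) for i ≠ j and (M_2γ_λ)(a_i,a_i) = (N/(N−1)) λ({a_i})^2 − (1/(N−1)) λ({a_i}). -/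
open Finset

/-!
Write `λ = margOf x₀`. Then `γ_λ` is the average of the point masses at the rearrangements
`x₀ ∘ σ`, so `M₂γ_λ(i, j)` is the proportion of permutations `σ` with `x₀ (σ 0) = i` and
`x₀ (σ 1) = j`. Since permutations act 2-transitively, `(σ 0, σ 1)` is equidistributed over the
`N (N - 1)` ordered pairs of distinct indices, and exactly `Nλᵢ · Nλⱼ - δᵢⱼ Nλᵢ` of these pairs
`(a, b)` satisfy `x₀ a = i` and `x₀ b = j`.
-/

open scoped Nat

theorem Finset.sum_offDiag_mul {ι R : Type*} [DecidableEq ι] [CommRing R] (s : Finset ι)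
    (g h : ι → R) :
    ∑ p ∈ s.offDiag, g p.1 * h p.2 = (∑ a ∈ s, g a) * ∑ b ∈ s, h b - ∑ a ∈ s, g a * h a := by
  rw [eq_sub_iff_add_eq, sum_mul_sum, ← sum_product', ← diag_union_offDiag,
    sum_union (disjoint_diag_offDiag s), sum_diag, add_comm]

namespace Equiv.Perm

variable {α M : Type*} [Fintype α] [DecidableEq α] [AddCommMonoid M]

theorem sum_apply_apply_eq_of_ne (f : α → α → M) {u v u' v' : α} (huv : u ≠ v)
    (huv' : u' ≠ v') :
    ∑ τ : Perm α, f (τ u) (τ v) = ∑ τ : Perm α, f (τ u') (τ v') := by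
  obtain ⟨π, hπu, hπv⟩ :=
    MulAction.is_two_pretransitive_iff.mp (isMultiplyPretransitive α 2) huv' huv
  refine Fintype.sum_equiv (Equiv.mulRight π) _ _ fun τ => ?_
  simp [← hπu, ← hπv]

theorem card_offDiag_nsmul_sum_apply_apply (f : α → α → M) {u v : α} (huv : u ≠ v) :
    #(univ : Finset α).offDiag • ∑ τ : Perm α, f (τ u) (τ v)
      = (Fintype.card α)! • ∑ p ∈ (univ : Finset α).offDiag, f p.1 p.2 := by
  calc #(univ : Finset α).offDiag • ∑ τ : Perm α, f (τ u) (τ v)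
      = ∑ p ∈ (univ : Finset α).offDiag, ∑ τ : Perm α, f (τ p.1) (τ p.2) := by
        rw [← sum_const]
        exact sum_congr rfl fun p hp => sum_apply_apply_eq_of_ne f huv (mem_offDiag.mp hp).2.2
    _ = ∑ τ : Perm α, ∑ p ∈ (univ : Finset α).offDiag, f p.1 p.2 := by
        rw [sum_comm]
        refine sum_congr rfl fun τ _ => ?_
        exact sum_equiv (.prodCongr τ τ) (by simp [τ.injective.ne_iff]) fun _ _ => rfl
    _ = (Fintype.card α)! • ∑ p ∈ (univ : Finset α).offDiag, f p.1 p.2 := by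
        rw [sum_const, Finset.card_univ, Fintype.card_perm]

end Equiv.Perm

section

variable {N ℓ : ℕ}

theorem sum_mul_symmetrize_indicator (g : (Fin N → Fin ℓ) → ℝ) (x₀ : Fin N → Fin ℓ) :
    ∑ x, g x * symmetrize N ℓ (fun x => if x = x₀ then 1 else 0) x
      = (N ! : ℝ)⁻¹ * ∑ σ : Equiv.Perm (Fin N), g (x₀ ∘ σ) := by
  have hfiber (σ : Equiv.Perm (Fin N)) :
      ∑ x, (if x ∘ σ = x₀ then g x else 0) = g (x₀ ∘ σ.symm) := by
    simp only [← Equiv.eq_comp_symm, sum_ite_eq', mem_univ, if_true]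
  calc ∑ x, g x * symmetrize N ℓ (fun x => if x = x₀ then 1 else 0) x
      = (N ! : ℝ)⁻¹ * ∑ σ : Equiv.Perm (Fin N), ∑ x, if x ∘ σ = x₀ then g x else 0 := by
        simp only [symmetrize, one_div, mul_sum, sum_mul, mul_ite, ite_mul, mul_one, mul_zero,
          zero_mul, mul_comm (g _)]
        rw [sum_comm]
    _ = (N ! : ℝ)⁻¹ * ∑ σ : Equiv.Perm (Fin N), g (x₀ ∘ σ) := by
        rw [← Fintype.sum_equiv (Equiv.inv _) _ _ fun σ => rfl]
        simp [hfiber]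

theorem exists_gammaLam_eq_symmetrize {lam : Fin ℓ → ℝ} (hlam : lam ∈ QuantFinset N ℓ) :
    ∃ x₀, margOf N ℓ x₀ = lam ∧
      gammaLam N ℓ lam = symmetrize N ℓ (fun x => if x = x₀ then 1 else 0) := by
  have h : ∃ x, margOf N ℓ x = lam := by simpa [QuantFinset] using hlam
  exact ⟨h.choose, h.choose_spec, dif_pos h⟩

variable [NeZero N]

theorem marg2_symmetrize_indicator (x₀ : Fin N → Fin ℓ) (i j : Fin ℓ) :
    marg2 N ℓ (symmetrize N ℓ (fun x => if x = x₀ then 1 else 0)) i j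
      = (N ! : ℝ)⁻¹ * ∑ σ : Equiv.Perm (Fin N),
          (if x₀ (σ 0) = i then 1 else 0) * (if x₀ (σ 1) = j then 1 else 0) := by
  calc marg2 N ℓ (symmetrize N ℓ (fun x => if x = x₀ then 1 else 0)) i j
      = ∑ x, ((if x 0 = i then 1 else 0) * (if x 1 = j then 1 else 0)) *
          symmetrize N ℓ (fun x => if x = x₀ then 1 else 0) x :=
        sum_congr rfl fun x _ => by simp only [ite_and, ite_mul, one_mul, zero_mul]
    _ = _ := sum_mul_symmetrize_indicator _ x₀

theorem sum_ite_eq_mul_margOf (x₀ : Fin N → Fin ℓ) (i : Fin ℓ) :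
    ∑ a, (if x₀ a = i then (1 : ℝ) else 0) = N * margOf N ℓ x₀ i := by
  rw [sum_boole, margOf, mul_div_cancel₀ _ (NeZero.ne _)]

theorem sum_offDiag_ite_mul_ite (x₀ : Fin N → Fin ℓ) (i j : Fin ℓ) :
    ∑ p ∈ (univ : Finset (Fin N)).offDiag,
        (if x₀ p.1 = i then (1 : ℝ) else 0) * (if x₀ p.2 = j then 1 else 0)
      = N * (N * margOf N ℓ x₀ i * margOf N ℓ x₀ j - if i = j then margOf N ℓ x₀ i else 0) := by
  have hdiag : ∑ a, (if x₀ a = i ∧ x₀ a = j then (1 : ℝ) else 0)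
      = if i = j then N * margOf N ℓ x₀ i else 0 := by
    split_ifs with hij
    · simp only [hij, and_self, sum_ite_eq_mul_margOf]
    · exact sum_eq_zero fun a _ => if_neg fun h => hij (h.1.symm.trans h.2)
  rw [sum_offDiag_mul univ (fun a => if x₀ a = i then (1 : ℝ) else 0)
    (fun b => if x₀ b = j then (1 : ℝ) else 0)]
  simp only [sum_ite_eq_mul_margOf, ite_zero_mul_ite_zero, mul_one, hdiag]
  rw [mul_sub, mul_ite, mul_zero]
  ring

theorem marg2_gammaLam (hN : 2 ≤ N) {lam : Fin ℓ → ℝ} (hlam : lam ∈ QuantFinset N ℓ)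
    (i j : Fin ℓ) :
    marg2 N ℓ (gammaLam N ℓ lam) i j
      = (N * lam i * lam j - if i = j then lam i else 0) / (N - 1) := by
  obtain ⟨x₀, rfl, hγ⟩ := exists_gammaLam_eq_symmetrize hlam
  have h01 : (0 : Fin N) ≠ 1 := by simp; omega
  have hN0 : (N : ℝ) ≠ 0 := Nat.cast_ne_zero.mpr (NeZero.ne N)
  have hN1 : (N : ℝ) - 1 ≠ 0 := by
    have : (2 : ℝ) ≤ N := by exact_mod_cast hN
    linarith
  have hcard : ((#(univ : Finset (Fin N)).offDiag : ℕ) : ℝ) = N * (N - 1) := by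
    rw [offDiag_card, Finset.card_univ, Fintype.card_fin, Nat.cast_sub (Nat.le_mul_self N)]
    push_cast
    ring
  have hcount := Equiv.Perm.card_offDiag_nsmul_sum_apply_apply
    (fun a b => (if x₀ a = i then (1 : ℝ) else 0) * (if x₀ b = j then 1 else 0)) h01
  rw [nsmul_eq_mul, nsmul_eq_mul, hcard, Fintype.card_fin, sum_offDiag_ite_mul_ite, mul_comm,
    ← eq_div_iff (mul_ne_zero hN0 hN1)] at hcount
  rw [hγ, marg2_symmetrize_indicator, hcount]
  field_simp

end

/-- explicit formula for the two-point marginal of γ_λ: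
M₂γ_λ = (N/(N−1)) λ⊗λ − (1/(N−1)) Σ_i λ({a_i}) δ_{a_i}⊗δ_{a_i}. -/
theorem two_marginal_of_gammaLam (ℓ N : ℕ) [NeZero N] (hN : 2 ≤ N)
    (lam : Fin ℓ → ℝ) (hlam : lam ∈ QuantFinset N ℓ) :
    (∀ i j : Fin ℓ, i ≠ j →
        marg2 N ℓ (gammaLam N ℓ lam) i j
          = ((N : ℝ) / ((N : ℝ) - 1)) * lam i * lam j)
    ∧ (∀ i : Fin ℓ,
        marg2 N ℓ (gammaLam N ℓ lam) i i
          = ((N : ℝ) / ((N : ℝ) - 1)) * (lam i) ^ 2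
            - (1 / ((N : ℝ) - 1)) * lam i) := by
  refine ⟨fun i j hij => ?_, fun i => ?_⟩
  · rw [marg2_gammaLam hN hlam, if_neg hij, sub_zero]
    ring
  · rw [marg2_gammaLam hN hlam, if_pos rfl]
    ring
end

section
/- Let X = {a_1,…,a_ℓ} be a finite set of ℓ distinct points, N ≥ 2, and let w : X × X → ℝ be symmetric. Define the pairwise cost c(x_1,…,x_N) = Σ_{1 ≤ i < j ≤ N} w(x_i,x_j), the matrix C ∈ ℝ^{ℓ×ℓ} by C_{ij} = w(a_i,a_j), and for λ ∈ P_{1/N}(X) the cost coefficient c_λ := Σ_{x ∈ X^N} γ_λ(x) c(x). Then, regarding λ as the vector in ℝ^ℓ with components λ_i = λ({a_i}), one has c_λ = (N²/2) λ^T C λ − (N/2) diag(C)^T λ, where diag(C) ∈ ℝ^ℓ is the vector with entries C_{ii}. -/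
/-!
Since `w` is symmetric, the pair cost `c` is invariant under permutations of the `N` coordinates.
The symmetrizer is self-adjoint for the pairing `∑ₓ γ x * c x` and fixes such `c`, so `c_λ` is
the cost `c y` of any single configuration `y` with empirical measure `λ`. Twice the sum over
`i < j` is the full double sum minus the diagonal, and grouping the coordinates of `y` by value
turns `∑ₖ g (y k)` into `N * ∑ₐ g a * λ a`.
-/

open Finset

theorem Finset.sum_sum_eq_two_nsmul_sum_lt_add_sum_diag {α M : Type*} [Fintype α] [LinearOrder α]
    [AddCommMonoid M] (f : α → α → M) (hf : ∀ i j, f i j = f j i) :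
    ∑ i, ∑ j, f i j
      = 2 • ∑ p ∈ univ.filter (fun p : α × α => p.1 < p.2), f p.1 p.2 + ∑ i, f i i := by
  have split : ∀ i j, f i j
      = (if i < j then f i j else 0) + (if j < i then f i j else 0)
        + (if i = j then f i j else 0) := by
    intro i j
    rcases lt_trichotomy i j with h | rfl | h
    · simp [h, h.not_gt, h.ne]
    · simp
    · simp [h, h.not_gt, h.ne']
  have swap : ∑ i, ∑ j, (if j < i then f i j else 0) = ∑ i, ∑ j, if i < j then f i j else 0 := by
    rw [Finset.sum_comm]
    simp_rw [hf]
  rw [Fintype.sum_congr _ _ fun i => Fintype.sum_congr _ _ fun j => split i j]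
  simp only [sum_add_distrib, swap, sum_ite_eq, mem_univ, if_true, two_nsmul, sum_filter,
    Fintype.sum_prod_type]

section

variable {N ℓ : ℕ}

theorem sum_symmetrize_mul (γ c : (Fin N → Fin ℓ) → ℝ) :
    ∑ x, symmetrize N ℓ γ x * c x = ∑ x, γ x * symmetrize N ℓ c x := by
  have reindex (σ : Equiv.Perm (Fin N)) :
      ∑ x, γ (x ∘ σ) * c x = ∑ x, γ x * c (x ∘ ⇑σ⁻¹) :=
    Fintype.sum_equiv (σ.symm.arrowCongr (Equiv.refl _)) _ _ fun x => by
      simp [Equiv.arrowCongr, Function.comp_assoc]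
  calc ∑ x, symmetrize N ℓ γ x * c x
      = (1 / (N.factorial : ℝ)) * ∑ σ : Equiv.Perm (Fin N), ∑ x, γ (x ∘ σ) * c x := by
        simp only [symmetrize, mul_sum, sum_mul, mul_assoc]
        rw [sum_comm]
    _ = (1 / (N.factorial : ℝ)) * ∑ σ : Equiv.Perm (Fin N), ∑ x, γ x * c (x ∘ σ) := by
        simp only [reindex]
        rw [← Equiv.sum_comp (Equiv.inv _)]
        simp
    _ = ∑ x, γ x * symmetrize N ℓ c x := by
        simp only [symmetrize, mul_sum]
        rw [sum_comm]
        simp only [mul_left_comm]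

theorem symmetrize_eq_self {c : (Fin N → Fin ℓ) → ℝ} (hc : IsSymmFun N ℓ c) :
    symmetrize N ℓ c = c := by
  funext x
  simp only [symmetrize, fun σ => hc σ x, sum_const, card_univ, Fintype.card_perm,
    Fintype.card_fin, nsmul_eq_mul]
  field_simp

theorem exists_margOf_eq_and_cCoef_eq {c : (Fin N → Fin ℓ) → ℝ} (hc : IsSymmFun N ℓ c)
    {lam : Fin ℓ → ℝ} (hlam : lam ∈ QuantFinset N ℓ) :
    ∃ y, margOf N ℓ y = lam ∧ cCoef N ℓ c lam = c y := by
  have hex : ∃ y, margOf N ℓ y = lam := by simpa [QuantFinset] using hlam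
  refine ⟨hex.choose, hex.choose_spec, ?_⟩
  simp [cCoef, gammaLam, dif_pos hex, sum_symmetrize_mul, symmetrize_eq_self hc]

theorem isSymmFun_sum_filter_lt {w : Fin ℓ → Fin ℓ → ℝ} (hw : ∀ a b, w a b = w b a) :
    IsSymmFun N ℓ fun x => ∑ p ∈ univ.filter (fun p : Fin N × Fin N => p.1 < p.2),
      w (x p.1) (x p.2) := by
  intro σ x
  have total := sum_sum_eq_two_nsmul_sum_lt_add_sum_diag (fun i j => w (x i) (x j))
    fun i j => hw _ _
  have total_perm := sum_sum_eq_two_nsmul_sum_lt_add_sum_diag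
    (fun i j => w ((x ∘ σ) i) ((x ∘ σ) j)) fun i j => hw _ _
  have sum_sum_perm : ∑ i, ∑ j, w ((x ∘ σ) i) ((x ∘ σ) j) = ∑ i, ∑ j, w (x i) (x j) := by
    simp only [Function.comp_apply]
    exact (Equiv.sum_comp σ fun i => ∑ j, w (x i) (x (σ j))).trans
      (Fintype.sum_congr _ _ fun i => Equiv.sum_comp σ fun j => w (x i) (x j))
  have diag_perm : ∑ i, w ((x ∘ σ) i) ((x ∘ σ) i) = ∑ i, w (x i) (x i) :=
    Equiv.sum_comp σ fun i => w (x i) (x i)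
  simp only [two_nsmul] at total total_perm
  linarith

theorem card_filter_eq_mul_margOf (y : Fin N → Fin ℓ) (a : Fin ℓ) :
    (#{k | y k = a} : ℝ) = N * margOf N ℓ y a := by
  rcases eq_or_ne N 0 with rfl | hN
  · simp
  · simp only [margOf]
    field_simp

theorem sum_comp_eq_mul_sum_margOf (y : Fin N → Fin ℓ) (g : Fin ℓ → ℝ) :
    ∑ k, g (y k) = N * ∑ a, g a * margOf N ℓ y a := by
  rw [← sum_fiberwise' univ y g, mul_sum]
  refine sum_congr rfl fun a _ => ?_
  rw [sum_const, nsmul_eq_mul, card_filter_eq_mul_margOf]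
  ring

theorem two_mul_sum_filter_lt_eq {w : Fin ℓ → Fin ℓ → ℝ} (hw : ∀ a b, w a b = w b a)
    {y : Fin N → Fin ℓ} {lam : Fin ℓ → ℝ} (hy : margOf N ℓ y = lam) :
    2 * ∑ p ∈ univ.filter (fun p : Fin N × Fin N => p.1 < p.2), w (y p.1) (y p.2)
      = N ^ 2 * ∑ a, ∑ b, lam a * w a b * lam b - N * ∑ a, w a a * lam a := by
  have count (g : Fin ℓ → ℝ) : ∑ k, g (y k) = N * ∑ a, g a * lam a :=
    hy ▸ sum_comp_eq_mul_sum_margOf y g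
  have quad : ∑ a, (N * ∑ b, w a b * lam b) * lam a = N * ∑ a, ∑ b, lam a * w a b * lam b := by
    simp only [mul_sum, sum_mul]
    exact sum_congr rfl fun a _ => sum_congr rfl fun b _ => by ring
  have total := sum_sum_eq_two_nsmul_sum_lt_add_sum_diag (fun i j => w (y i) (y j))
    fun i j => hw _ _
  simp only [count (w (y _)), count fun a => N * ∑ b, w a b * lam b, count fun a => w a a, quad,
    two_nsmul] at total
  linarith

end

theorem fast_cost_evaluation_general (ℓ N : ℕ)
    (w : Fin ℓ → Fin ℓ → ℝ) (hw : ∀ a b, w a b = w b a)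
    (lam : Fin ℓ → ℝ) (hlam : lam ∈ QuantFinset N ℓ) :
    cCoef N ℓ
        (fun x => ∑ p ∈ Finset.univ.filter (fun p : Fin N × Fin N => p.1 < p.2),
          w (x p.1) (x p.2)) lam
      = ((N : ℝ) ^ 2 / 2) * (∑ i : Fin ℓ, ∑ j : Fin ℓ, lam i * w i j * lam j)
        - ((N : ℝ) / 2) * (∑ i : Fin ℓ, w i i * lam i) := by
  obtain ⟨y, hy, hcost⟩ := exists_margOf_eq_and_cCoef_eq (isSymmFun_sum_filter_lt hw) hlam
  rw [hcost]
  linarith [two_mul_sum_filter_lt_eq hw hy]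

/-- Corollary 1 of the paper: fast cost evaluation. For a pairwise
cost built from a symmetric pair potential w, with C_{ij} = w(a_i,a_j),
c_λ = (N²/2) λᵀCλ − (N/2) diag(C)ᵀλ. -/
theorem fast_cost_evaluation (ℓ N : ℕ) [NeZero N] (hN : 2 ≤ N)
    (w : Fin ℓ → Fin ℓ → ℝ) (hw : ∀ a b, w a b = w b a)
    (lam : Fin ℓ → ℝ) (hlam : lam ∈ QuantFinset N ℓ) :
    cCoef N ℓ
        (fun x => ∑ p ∈ Finset.univ.filter (fun p : Fin N × Fin N => p.1 < p.2),
          w (x p.1) (x p.2)) lam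
      = ((N : ℝ) ^ 2 / 2) * (∑ i : Fin ℓ, ∑ j : Fin ℓ, lam i * w i j * lam j)
        - ((N : ℝ) / 2) * (∑ i : Fin ℓ, w i i * lam i) :=
  fast_cost_evaluation_general ℓ N w hw lam hlam
end

section
/- Let q ≥ 1 and let A ∈ ℝ^{q×q} be a symmetric matrix with entries in {0,1} and zero diagonal. Suppose λ ∈ ℝ^q satisfies λ_i ≥ 0 for all i, Σ_{i=1}^q λ_i = q, and λ^T A λ ≥ q(q−1). Then λ_i = 1 for all i, and A = E^q (every off-diagonal entry of A equals 1). -/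
open Finset

/-! Put `E := offDiagOnes`. Since `A ≤ E` entrywise and `λ ≥ 0`, the form `λᵀ(E - A)λ` is a sum
of nonnegative terms, and so is `∑ (λᵢ - 1)²`. Using `λᵀEλ = (∑ λᵢ)² - ∑ λᵢ²` and `∑ λᵢ = q`, the
two sums add up to `q(q - 1) - λᵀAλ ≤ 0`. Hence every term of both vanishes: first `λ = 1`, and
then `A = E`. -/

variable {ι : Type*} [Fintype ι]

/-- The matrix `E^q`. -/
def offDiagOnes (ι : Type*) [DecidableEq ι] : Matrix ι ι ℝ :=
  Matrix.of fun i j => if i = j then 0 else 1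

theorem sum_sum_mul_offDiagOnes_mul [DecidableEq ι] (lam : ι → ℝ) :
    ∑ i, ∑ j, lam i * offDiagOnes ι i j * lam j = (∑ i, lam i) ^ 2 - ∑ i, lam i ^ 2 := by
  have h : ∀ i j, lam i * offDiagOnes ι i j * lam j
      = lam i * lam j - if i = j then lam i * lam j else 0 := by
    intro i j; by_cases h : i = j <;> simp [offDiagOnes, h]
  simp only [h, sum_sub_distrib, sum_ite_eq, mem_univ, if_true, sq, sum_mul_sum]

theorem sum_sub_one_sq (lam : ι → ℝ) :
    ∑ i, (lam i - 1) ^ 2 = ∑ i, lam i ^ 2 - 2 * ∑ i, lam i + Fintype.card ι := by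
  simp only [sub_sq, mul_one, one_pow, sum_add_distrib, sum_sub_distrib, ← mul_sum,
    sum_const, card_univ, nsmul_eq_mul]

theorem eq_zero_of_sum_sum_eq_zero_of_nonneg {f : ι → ι → ℝ} (hf : ∀ i j, 0 ≤ f i j)
    (h : ∑ i, ∑ j, f i j = 0) (i j : ι) : f i j = 0 := by
  rw [← Fintype.sum_prod_type', Fintype.sum_eq_zero_iff_of_nonneg fun p => hf p.1 p.2] at h
  exact congrFun h (i, j)

theorem eq_offDiagOnes_of_card_mul_pred_le_quadForm [DecidableEq ι] (A : Matrix ι ι ℝ)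
    (hA : ∀ i j, A i j ≤ offDiagOnes ι i j) (lam : ι → ℝ) (hpos : ∀ i, 0 ≤ lam i)
    (hsum : ∑ i, lam i = Fintype.card ι)
    (hquad : (Fintype.card ι : ℝ) * (Fintype.card ι - 1) ≤ ∑ i, ∑ j, lam i * A i j * lam j) :
    (∀ i, lam i = 1) ∧ A = offDiagOnes ι := by
  set gap : ι → ι → ℝ := fun i j => lam i * (offDiagOnes ι i j - A i j) * lam j
  have hgap : ∀ i j, 0 ≤ gap i j := fun i j =>
    mul_nonneg (mul_nonneg (hpos i) (sub_nonneg.2 (hA i j))) (hpos j)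
  have hsq : ∀ i, 0 ≤ (lam i - 1) ^ 2 := fun i => sq_nonneg _
  have hgap_sum : 0 ≤ ∑ i, ∑ j, gap i j := sum_nonneg fun i _ => sum_nonneg fun j _ => hgap i j
  have hsq_sum : 0 ≤ ∑ i, (lam i - 1) ^ 2 := sum_nonneg fun i _ => hsq i
  have htotal : ∑ i, ∑ j, gap i j + ∑ i, (lam i - 1) ^ 2
      = Fintype.card ι * (Fintype.card ι - 1) - ∑ i, ∑ j, lam i * A i j * lam j := by
    have : ∀ i j, gap i j = lam i * offDiagOnes ι i j * lam j - lam i * A i j * lam j :=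
      fun i j => by simp only [gap]; ring
    simp only [this, sum_sub_distrib, sum_sum_mul_offDiagOnes_mul, sum_sub_one_sq, hsum]
    ring
  obtain ⟨hgap0, hsq0⟩ := (add_eq_zero_iff_of_nonneg hgap_sum hsq_sum).1 (by linarith)
  have hlam : ∀ i, lam i = 1 := fun i => by
    have := (sum_eq_zero_iff_of_nonneg fun i _ => hsq i).1 hsq0 i (mem_univ i)
    linarith [pow_eq_zero_iff two_ne_zero |>.1 this]
  refine ⟨hlam, Matrix.ext fun i j => ?_⟩
  have := eq_zero_of_sum_sum_eq_zero_of_nonneg hgap hgap0 i j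
  simp only [gap, hlam, one_mul, mul_one] at this
  linarith

theorem quadratic_form_rigidity_general (q : ℕ)
    (A : Matrix (Fin q) (Fin q) ℝ)
    (h01 : ∀ i j, A i j = 0 ∨ A i j = 1)
    (hdiag : ∀ i, A i i = 0)
    (lam : Fin q → ℝ) (hpos : ∀ i, 0 ≤ lam i) (hsum : ∑ i, lam i = (q : ℝ))
    (hquad : (q : ℝ) * ((q : ℝ) - 1) ≤ ∑ i : Fin q, ∑ j : Fin q, lam i * A i j * lam j) :
    (∀ i, lam i = 1) ∧ ∀ i j, i ≠ j → A i j = 1 := by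
  have hA : ∀ i j, A i j ≤ offDiagOnes (Fin q) i j := fun i j => by
    by_cases h : i = j
    · simp [offDiagOnes, h, hdiag]
    · rcases h01 i j with h0 | h1 <;> simp [offDiagOnes, *]
  obtain ⟨hlam, rfl⟩ := eq_offDiagOnes_of_card_mul_pred_le_quadForm A hA lam hpos
    (by simpa using hsum) (by simpa using hquad)
  exact ⟨hlam, fun i j h => by simp [offDiagOnes, h]⟩

/-- if A is a symmetric 0/1 matrix with zero diagonal and
λ ≥ 0 satisfies Σ λ_i = q and λᵀAλ ≥ q(q−1), then λ is the all-ones vector and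
A = E^q, i.e. every off-diagonal entry of A equals 1. -/
theorem quadratic_form_rigidity (q : ℕ) (hq : 1 ≤ q)
    (A : Matrix (Fin q) (Fin q) ℝ)
    (hsym : ∀ i j, A i j = A j i)
    (h01 : ∀ i j, A i j = 0 ∨ A i j = 1)
    (hdiag : ∀ i, A i i = 0)
    (lam : Fin q → ℝ) (hpos : ∀ i, 0 ≤ lam i) (hsum : ∑ i, lam i = (q : ℝ))
    (hquad : (q : ℝ) * ((q : ℝ) - 1) ≤ ∑ i : Fin q, ∑ j : Fin q, lam i * A i j * lam j) :
    (∀ i, lam i = 1) ∧ ∀ i j, i ≠ j → A i j = 1 :=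
  quadratic_form_rigidity_general q A h01 hdiag lam hpos hsum hquad
end

section
/- Let G = (V,E) be a finite simple undirected graph with vertex set V = {1,…,ℓ}, let A_G ∈ {0,1}^{ℓ×ℓ} be its adjacency matrix ((A_G)_{ij} = 1 iff {i,j} ∈ E, in particular (A_G)_{ii} = 0), and let K' ∈ ℕ with K' ≤ ℓ. Then G contains a clique of size at least K' if and only if there exists λ ∈ {0,1,…,K'}^ℓ with Σ_{i=1}^ℓ λ_i = K' and λ^T A_G λ ≥ K'(K'−1). Moreover, any such λ has entries in {0,1} and its support is a clique of size K' in G. -/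
open Finset

/-- reduction of the clique decision problem to the pricing
decision problem. G contains a clique of size at least K' iff there is
λ ∈ {0,…,K'}^ℓ with Σ λ_i = K' and λᵀA_Gλ ≥ K'(K'−1); moreover any such λ is a
0/1 vector whose support is a clique of size K'. -/
theorem clique_iff_pricing (ℓ : ℕ) (G : SimpleGraph (Fin ℓ)) [DecidableRel G.Adj]
    (K' : ℕ) (hK : K' ≤ ℓ) :
    ((∃ C : Finset (Fin ℓ), G.IsClique ↑C ∧ K' ≤ C.card) ↔
      ∃ lam : Fin ℓ → ℕ, (∀ i, lam i ≤ K') ∧ (∑ i, lam i = K') ∧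
        (K' : ℝ) * ((K' : ℝ) - 1) ≤
          ∑ i : Fin ℓ, ∑ j : Fin ℓ,
            (lam i : ℝ) * (if G.Adj i j then (1 : ℝ) else 0) * (lam j : ℝ))
    ∧ ∀ lam : Fin ℓ → ℕ, (∀ i, lam i ≤ K') → (∑ i, lam i = K') →
        (K' : ℝ) * ((K' : ℝ) - 1) ≤
          (∑ i : Fin ℓ, ∑ j : Fin ℓ,
            (lam i : ℝ) * (if G.Adj i j then (1 : ℝ) else 0) * (lam j : ℝ)) →
        (∀ i, lam i ≤ 1) ∧
        G.IsClique {i | lam i = 1} ∧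
        (Finset.univ.filter fun i => lam i = 1).card = K' := by
  classical
  set a : Fin ℓ → Fin ℓ → ℕ := fun i j => if G.Adj i j then 1 else 0 with ha
  -- the real quadratic form equals the cast of the natural one
  have hcast : ∀ lam : Fin ℓ → ℕ,
      (∑ i : Fin ℓ, ∑ j : Fin ℓ,
        (lam i : ℝ) * (if G.Adj i j then (1 : ℝ) else 0) * (lam j : ℝ))
      = ((∑ i : Fin ℓ, ∑ j : Fin ℓ, lam i * a i j * lam j : ℕ) : ℝ) := by
    intro lam
    push_cast
    refine Finset.sum_congr rfl fun i _ => Finset.sum_congr rfl fun j _ => ?_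
    by_cases h : G.Adj i j <;> simp [ha, h]
  have hKcast : ((K' * (K' - 1) : ℕ) : ℝ) = (K' : ℝ) * ((K' : ℝ) - 1) := by
    cases K' with
    | zero => simp
    | succ n => push_cast [Nat.succ_sub_one]; ring
  have hKK : ∀ n : ℕ, n * (n - 1) + n = n * n := by
    intro n
    cases n with
    | zero => simp
    | succ m => simp [Nat.succ_sub_one]; ring
  -- the main structural lemma, in ℕ
  have main : ∀ lam : Fin ℓ → ℕ, (∑ i, lam i = K') →
      K' * (K' - 1) ≤ ∑ i : Fin ℓ, ∑ j : Fin ℓ, lam i * a i j * lam j →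
      (∀ i, lam i ≤ 1) ∧
      G.IsClique {i | lam i = 1} ∧
      (Finset.univ.filter fun i => lam i = 1).card = K' := by
    intro lam hs hq
    set g : Fin ℓ → Fin ℓ → ℕ := fun i j => if i = j then 0 else lam i * lam j with hg
    have hfg : ∀ i j : Fin ℓ, lam i * a i j * lam j ≤ g i j := by
      intro i j
      by_cases h : i = j
      · subst h; simp [ha, hg]
      · simp only [hg, if_neg h]
        by_cases hadj : G.Adj i j <;> simp [ha, hadj]
    set T : ℕ := ∑ i, lam i * lam i with hT
    have per_i : ∀ i : Fin ℓ, (∑ j, g i j) + lam i * lam i = lam i * K' := by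
      intro i
      have h1 : ∑ j, g i j = ∑ j ∈ univ.erase i, lam i * lam j := by
        rw [← Finset.sum_erase_add univ (g i) (mem_univ i)]
        have : g i i = 0 := by simp [hg]
        rw [this, add_zero]
        exact Finset.sum_congr rfl fun j hj => by
          simp [hg, (Finset.ne_of_mem_erase hj).symm]
      rw [h1, Finset.sum_erase_add univ (fun j => lam i * lam j) (mem_univ i),
        ← Finset.mul_sum, hs]
    have hsumg : (∑ i, ∑ j, g i j) + T = K' * K' := by
      rw [hT, ← Finset.sum_add_distrib]
      calc (∑ i, ((∑ j, g i j) + lam i * lam i)) = ∑ i, lam i * K' := by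
            exact Finset.sum_congr rfl fun i _ => per_i i
        _ = K' * K' := by rw [← Finset.sum_mul, hs]
    have hSg : (∑ i : Fin ℓ, ∑ j : Fin ℓ, lam i * a i j * lam j) ≤ ∑ i, ∑ j, g i j :=
      Finset.sum_le_sum fun i _ => Finset.sum_le_sum fun j _ => hfg i j
    have hTK : K' ≤ T := by
      rw [← hs, hT]
      refine Finset.sum_le_sum fun i _ => ?_
      cases h : lam i with
      | zero => simp
      | succ m => exact Nat.le_mul_of_pos_left _ (Nat.succ_pos m)
    have hTeq : T = K' := by
      have h1 := hKK K'
      omega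
    -- pointwise: lam i * lam i = lam i
    have hsq : ∀ i : Fin ℓ, lam i * lam i = lam i := by
      have hle : ∀ i ∈ (univ : Finset (Fin ℓ)), lam i ≤ lam i * lam i := by
        intro i _
        cases h : lam i with
        | zero => simp
        | succ m => exact Nat.le_mul_of_pos_left _ (Nat.succ_pos m)
      have := (Finset.sum_eq_sum_iff_of_le hle).mp (by rw [hs, ← hTeq, hT])
      exact fun i => (this i (mem_univ i)).symm
    have hl1 : ∀ i, lam i ≤ 1 := by
      intro i
      have h1 := hsq i
      by_contra h
      push_neg at h
      have h2 : 2 ≤ lam i := h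
      have h3 : 2 * lam i ≤ lam i * lam i := Nat.mul_le_mul_right _ h2
      omega
    -- exact equality of the two double sums
    have hsumg' : (∑ i, ∑ j, g i j) = K' * (K' - 1) := by
      have := hKK K'
      omega
    have hfeq : ∀ i j : Fin ℓ, lam i * a i j * lam j = g i j := by
      have hle2 : (∑ i : Fin ℓ, ∑ j : Fin ℓ, lam i * a i j * lam j)
          = ∑ i : Fin ℓ, ∑ j : Fin ℓ, g i j := by
        have h1 : (∑ i : Fin ℓ, ∑ j : Fin ℓ, lam i * a i j * lam j) = K' * (K' - 1) :=
          le_antisymm (hsumg' ▸ hSg) hq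
        rw [h1, hsumg']
      have hrow := (Finset.sum_eq_sum_iff_of_le
        (fun i (_ : i ∈ (univ : Finset (Fin ℓ))) =>
          Finset.sum_le_sum fun j _ => hfg i j)).mp hle2
      intro i j
      exact (Finset.sum_eq_sum_iff_of_le
        (fun j (_ : j ∈ (univ : Finset (Fin ℓ))) => hfg i j)).mp
        (hrow i (mem_univ i)) j (mem_univ j)
    refine ⟨hl1, ?_, ?_⟩
    · intro i hi j hj hne
      have h1 : lam i = 1 := hi
      have h2 : lam j = 1 := hj
      have := hfeq i j
      simp only [hg, if_neg hne, h1, h2, one_mul, mul_one] at this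
      by_contra hadj
      simp [ha, hadj] at this
    · rw [Finset.card_filter, ← hs]
      refine Finset.sum_congr rfl fun i _ => ?_
      have := hl1 i
      by_cases h : lam i = 1
      · simp [h]
      · simp [h]; omega
  constructor
  · constructor
    · rintro ⟨C, hC, hCcard⟩
      obtain ⟨C', hC'sub, hC'card⟩ := Finset.exists_subset_card_eq hCcard
      have hC' : G.IsClique ↑C' := hC.subset (Finset.coe_subset.mpr hC'sub)
      refine ⟨fun i => if i ∈ C' then 1 else 0, ?_, ?_, ?_⟩
      · intro i
        by_cases h : i ∈ C'
        · simp only [if_pos h]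
          have : 0 < C'.card := Finset.card_pos.mpr ⟨i, h⟩
          omega
        · simp [h]
      · simp [hC'card]
      · rw [hcast, ← hKcast]
        apply Nat.cast_le.mpr
        calc K' * (K' - 1)
            = ∑ i ∈ C', (C'.card - 1) := by
              rw [Finset.sum_const, smul_eq_mul, hC'card]
          _ = ∑ i ∈ C', (C'.erase i).card := by
              refine Finset.sum_congr rfl fun i hi => ?_
              rw [Finset.card_erase_of_mem hi]
          _ = ∑ i ∈ C', ∑ j ∈ C'.erase i, 1 := by
              simp
          _ ≤ ∑ i ∈ C', ∑ j ∈ C'.erase i,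
                ((if i ∈ C' then 1 else 0) * a i j * if j ∈ C' then 1 else 0) := by
              refine Finset.sum_le_sum fun i hi => Finset.sum_le_sum fun j hj => ?_
              have hjC : j ∈ C' := Finset.mem_of_mem_erase hj
              have hadj : G.Adj i j :=
                hC' (by exact_mod_cast hi) (by exact_mod_cast hjC)
                  (Finset.ne_of_mem_erase hj).symm
              simp [hi, hjC, ha, hadj]
          _ ≤ ∑ i : Fin ℓ, ∑ j : Fin ℓ,
                ((if i ∈ C' then 1 else 0) * a i j * if j ∈ C' then 1 else 0) := by
              refine Finset.sum_le_sum_of_subset_of_nonneg (Finset.subset_univ _)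
                  (fun i _ _ => ?_) |>.trans ?_
              · exact Nat.zero_le _
              · refine Finset.sum_le_sum fun i _ => ?_
                exact Finset.sum_le_sum_of_subset_of_nonneg
                  (Finset.subset_univ _) (fun j _ _ => Nat.zero_le _)
    · rintro ⟨lam, hb, hs, hq⟩
      rw [hcast, ← hKcast] at hq
      obtain ⟨hl1, hcl, hcard⟩ := main lam hs (Nat.cast_le.mp hq)
      refine ⟨Finset.univ.filter fun i => lam i = 1, ?_, hcard.ge⟩
      have : ↑(Finset.univ.filter fun i => lam i = 1) = {i | lam i = 1} := by
        ext i; simp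
      rw [this]; exact hcl
  · intro lam hb hs hq
    rw [hcast, ← hKcast] at hq
    exact main lam hs (Nat.cast_le.mp hq)
end
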